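/- arXiv:1512.02563 — 5 statements merged into one kernel-verified Lean document; each statement's English description precedes it below -/
import Mathlib

section
/- For a triangular framed cycle C(P,L) in general position with vertices p₁, p₂, p₃ and framing lines ℓ₁, ℓ₂, ℓ₃, the following are equivalent: (a) the three lines ℓ₁, ℓ₂, ℓ₃ have a common point; (b) there exists a nonzero equilibrium force-load on C(P,L); (c) for any line ℓ not containing p₁, p₂, p₃, the monodromy operator M_ℓ(ℓᵢ, C(P,L)) is trivial for every i ∈ {1,2,3}. -/
open scoped Classical

noncomputable section

abbrev V3 : Type := Fin 3 → ℝ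
abbrev Form : Type := V3 → V3 → ℝ

/-- The covector dual to `p` (`dp`). -/
def dualE (p : V3) : V3 → ℝ := fun x => ∑ i, p i * x i

/-- The wedge product `dp ∧ dq`, as a bilinear form on ℝ³. -/
def wedgeE (p q : V3) : Form :=
  fun x y => dualE p x * dualE q y - dualE p y * dualE q x

/-- The projective line through the points represented by `p` and `q`, as a subspace of ℝ³. -/
def projLine (p q : V3) : Submodule ℝ V3 := Submodule.span ℝ {p, q}

/-- `F` is a force whose line of force lies in the (2-dimensional) subspace `W`. -/
def AlongSub (F : Form) (W : Submodule ℝ V3) : Prop :=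
  ∃ a b : V3, a ∈ W ∧ b ∈ W ∧ F = wedgeE a b

/-- A framed cycle in ℝP²: points `P i` together with lines `L i` through them. -/
structure FramedCycle (k : ℕ) where
  P : Fin k → V3
  L : Fin k → Submodule ℝ V3
  hP : ∀ i, P i ≠ 0
  hL : ∀ i, Module.finrank ℝ (L i) = 2
  hPL : ∀ i, P i ∈ L i

/-- The line of the edge `pᵢ p_{i+1}` of a framed cycle. -/
def edgeLn {k : ℕ} [NeZero k] (C : FramedCycle k) (i : Fin k) : Submodule ℝ V3 :=
  projLine (C.P i) (C.P (i + 1))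

/-- A framed cycle is in general position: the edge lines are genuine lines with exactly
`k(k−1)/2` distinct pairwise intersection points, and the framing line at `pᵢ` contains
neither `p_{i−1}` nor `p_{i+1}`. -/
def GenPos {k : ℕ} [NeZero k] (C : FramedCycle k) : Prop :=
  (∀ i, Module.finrank ℝ (edgeLn C i) = 2) ∧
  (∀ i j, i ≠ j → edgeLn C i ≠ edgeLn C j) ∧
  (∀ i j i' j' : Fin k, i ≠ j → i' ≠ j' →
    ({i, j} : Finset (Fin k)) ≠ ({i', j'} : Finset (Fin k)) →
    edgeLn C i ⊓ edgeLn C j ≠ edgeLn C i' ⊓ edgeLn C j') ∧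
  (∀ i, C.P (i - 1) ∉ C.L i ∧ C.P (i + 1) ∉ C.L i)

/-- A force-load on a framed cycle: `Fe i` is the stress `F_{i,i+1}` along the edge
`pᵢp_{i+1}` (with `F_{i+1,i} = −Fe i`), and `Ff i` is the framing force along `ℓᵢ`. -/
structure CycleLoad (k : ℕ) where
  Fe : Fin k → Form
  Ff : Fin k → Form

/-- The force-load has its forces along the prescribed lines of the framed cycle. -/
def CycleLoad.Valid {k : ℕ} [NeZero k] (F : CycleLoad k) (C : FramedCycle k) : Prop :=
  (∀ i, AlongSub (F.Fe i) (edgeLn C i)) ∧ (∀ i, AlongSub (F.Ff i) (C.L i))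

/-- The equilibrium condition `F_{i,i−1} + F_{i,i+1} + Fᵢ = 0` at the vertex `pᵢ`. -/
def EqAt {k : ℕ} [NeZero k] (F : CycleLoad k) (i : Fin k) : Prop :=
  -F.Fe (i - 1) + F.Fe i + F.Ff i = 0

/-- The force-load is nonzero. -/
def CycleLoad.Nonzero {k : ℕ} (F : CycleLoad k) : Prop :=
  (∃ i, F.Fe i ≠ 0) ∨ (∃ i, F.Ff i ≠ 0)

/-- The shift operator `ξ_ℓ` with respect to the auxiliary line `ℓ`: the point `X` of a
framing line is sent to `m' ∩ ((e ∩ ℓ), X)`, where `e` is the edge line. -/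
def shiftPt (e ℓ m' X : Submodule ℝ V3) : Submodule ℝ V3 := m' ⊓ ((e ⊓ ℓ) ⊔ X)

open Fin.NatCast in
/-- Composition of `n` consecutive shift operators of the framed cycle `C`, starting at the
framing line `ℓᵢ`. -/
def shiftChain {k : ℕ} [NeZero k] (C : FramedCycle k) (ℓ : Submodule ℝ V3) (i : Fin k) :
    ℕ → Submodule ℝ V3 → Submodule ℝ V3
  | 0, X => X
  | n + 1, X => shiftPt (edgeLn C (i + (n : Fin k))) ℓ (C.L (i + (n : Fin k) + 1))
      (shiftChain C ℓ i n X)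

/-- The monodromy operator `M_ℓ(ℓᵢ, C(P,L))` (the composition of the shifts around the whole
cycle) is trivial: it fixes every point of the line `ℓᵢ`. -/
def MonoTrivial {k : ℕ} [NeZero k] (C : FramedCycle k) (ℓ : Submodule ℝ V3) (i : Fin k) :
    Prop :=
  ∀ X : Submodule ℝ V3, X ≤ C.L i → Module.finrank ℝ X = 1 → shiftChain C ℓ i k X = X

open Submodule Module LinearMap

lemma dualE_add_left (p q x : V3) : dualE (p + q) x = dualE p x + dualE q x := by
  simp [dualE, add_mul, Finset.sum_add_distrib]

lemma dualE_smul_left (c : ℝ) (p x : V3) : dualE (c • p) x = c * dualE p x := by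
  simp [dualE, Finset.mul_sum, mul_assoc]

lemma dualE_comm (p x : V3) : dualE p x = dualE x p := by
  simp [dualE, mul_comm]

lemma dualE_self_ne {p : V3} (hp : p ≠ 0) : dualE p p ≠ 0 := by
  intro h
  apply hp
  funext i
  have h' : ∀ j ∈ Finset.univ, (0:ℝ) ≤ p j * p j := fun j _ => mul_self_nonneg _
  have := (Finset.sum_eq_zero_iff_of_nonneg h').1 h i (Finset.mem_univ i)
  simpa [mul_self_eq_zero] using this

lemma exists_dual_vec (f : V3 →ₗ[ℝ] ℝ) : ∃ v : V3, ∀ x, dualE v x = f x := by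
  refine ⟨fun i => f (Pi.single i 1), fun x => ?_⟩
  rw [dualE, LinearMap.pi_apply_eq_sum_univ f x]
  refine Finset.sum_congr rfl fun i _ => ?_
  rw [mul_comm]
  congr 1
  congr 1
  funext j
  simp [Pi.single_apply, eq_comm]

lemma exists_ker_eq (W : Submodule ℝ V3) (hW : Module.finrank ℝ W = 2) :
    ∃ f : V3 →ₗ[ℝ] ℝ, LinearMap.ker f = W := by
  have h3 : Module.finrank ℝ V3 = 3 := by
    simp [Module.finrank_pi]
  have hq : Module.finrank ℝ (V3 ⧸ W) = 1 := by
    have := Submodule.finrank_quotient_add_finrank W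
    omega
  have : Nonempty ((V3 ⧸ W) ≃ₗ[ℝ] ℝ) := by
    apply FiniteDimensional.nonempty_linearEquiv_of_finrank_eq
    simp [hq]
  obtain ⟨e⟩ := this
  refine ⟨(e : (V3 ⧸ W) →ₗ[ℝ] ℝ) ∘ₗ W.mkQ, ?_⟩
  rw [LinearMap.ker_comp, LinearEquiv.ker, Submodule.comap_bot, Submodule.ker_mkQ]

lemma ker_inf_span_pair (f : V3 →ₗ[ℝ] ℝ) (q x : V3) (hq : f q ≠ 0) :
    LinearMap.ker f ⊓ Submodule.span ℝ {q, x} =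
      Submodule.span ℝ {f x • q - f q • x} := by
  apply le_antisymm
  · rintro v ⟨hv1, hv2⟩
    obtain ⟨s, t, rfl⟩ := Submodule.mem_span_pair.1 hv2
    have hfv : s * f q + t * f x = 0 := by
      simpa [map_add, map_smul, smul_eq_mul] using hv1
    refine Submodule.mem_span_singleton.2 ⟨-t / f q, ?_⟩
    rw [smul_sub, smul_smul, smul_smul]
    match_scalars
    · field_simp; linear_combination -hfv
    · field_simp
  · rw [Submodule.span_le, Set.singleton_subset_iff]
    refine ⟨?_, ?_⟩
    · simp [LinearMap.mem_ker, map_sub, map_smul, smul_eq_mul, mul_comm]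
    · exact Submodule.sub_mem _
        (Submodule.smul_mem _ _ (Submodule.subset_span (by simp)))
        (Submodule.smul_mem _ _ (Submodule.subset_span (by simp)))

lemma shiftPt_span' (p p' x : V3) (μ f : V3 →ₗ[ℝ] ℝ) (hμ : μ p ≠ 0)
    (hq : f (μ p' • p - μ p • p') ≠ 0) :
    shiftPt (projLine p p') (LinearMap.ker μ) (LinearMap.ker f) (Submodule.span ℝ {x}) =
      Submodule.span ℝ
        {f x • (μ p' • p - μ p • p') - f (μ p' • p - μ p • p') • x} := by
  have h1 : projLine p p' ⊓ LinearMap.ker μ =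
      Submodule.span ℝ {μ p' • p - μ p • p'} := by
    rw [inf_comm, projLine, ker_inf_span_pair μ p p' hμ]
  rw [shiftPt, h1, ← Submodule.span_union, Set.singleton_union,
    ← ker_inf_span_pair f _ x hq]

/-- Generic triple-shift computation: under the concurrency condition `D = 0`,
the composite of the three shifts fixes every `span {x}` with `x` on `ker f`. -/
lemma tripleShift_eq_self (u v w x : V3) (f g h μ : V3 →ₗ[ℝ] ℝ)
    (hfu : f u = 0) (hgv : g v = 0) (hhw : h w = 0)
    (hfv : f v ≠ 0) (hfw : f w ≠ 0) (hgu : g u ≠ 0) (hgw : g w ≠ 0)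
    (hhu : h u ≠ 0) (hhv : h v ≠ 0)
    (hmu : μ u ≠ 0) (hmv : μ v ≠ 0) (hmw : μ w ≠ 0)
    (hD : f v * g w * h u + f w * g u * h v = 0)
    (a b c : ℝ) (hx : x = a • u + b • v + c • w)
    (hbc : f v * b + f w * c = 0) :
    shiftPt (projLine w u) (LinearMap.ker μ) (LinearMap.ker f)
      (shiftPt (projLine v w) (LinearMap.ker μ) (LinearMap.ker h)
        (shiftPt (projLine u v) (LinearMap.ker μ) (LinearMap.ker g)
          (Submodule.span ℝ {x}))) = Submodule.span ℝ {x} := by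
  have hq1 : g (μ v • u - μ u • v) ≠ 0 := by
    rw [map_sub, map_smul, map_smul, hgv, smul_eq_mul, smul_eq_mul, mul_zero, sub_zero]
    exact mul_ne_zero hmv hgu
  have hq2 : h (μ w • v - μ v • w) ≠ 0 := by
    rw [map_sub, map_smul, map_smul, hhw, smul_eq_mul, smul_eq_mul, mul_zero, sub_zero]
    exact mul_ne_zero hmw hhv
  have hq3 : f (μ u • w - μ w • u) ≠ 0 := by
    rw [map_sub, map_smul, map_smul, hfu, smul_eq_mul, smul_eq_mul, mul_zero, sub_zero]
    exact mul_ne_zero hmu hfw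
  rw [shiftPt_span' u v x μ g hmu hq1, shiftPt_span' v w _ μ h hmv hq2,
    shiftPt_span' w u _ μ f hmw hq3]
  have key : f (h (g x • (μ v • u - μ u • v) - g (μ v • u - μ u • v) • x) •
        (μ w • v - μ v • w) -
        h (μ w • v - μ v • w) •
          (g x • (μ v • u - μ u • v) - g (μ v • u - μ u • v) • x)) •
        (μ u • w - μ w • u) -
      f (μ u • w - μ w • u) •
        (h (g x • (μ v • u - μ u • v) - g (μ v • u - μ u • v) • x) •
          (μ w • v - μ v • w) -
          h (μ w • v - μ v • w) •
            (g x • (μ v • u - μ u • v) - g (μ v • u - μ u • v) • x)) =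
      (f v * g w * h u * (μ u * μ v * μ w)) • x := by
    subst hx
    simp only [map_add, map_sub, map_smul, smul_eq_mul, hfu, hgv, hhw]
    match_scalars
    · ring
    · linear_combination
        (-(μ v * μ w * (μ w * c + μ v * b + μ u * a))) * hD +
        (g w * h u * (μ v)^2 * μ w) * hbc
    · linear_combination (-(g w * h u * μ u * μ v * μ w)) * hbc
  rw [key]
  exact Submodule.span_singleton_smul_eq
    (IsUnit.mk0 _ (mul_ne_zero (mul_ne_zero (mul_ne_zero hfv hgw) hhu)
      (mul_ne_zero (mul_ne_zero hmu hmv) hmw))) x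

/-- Generic converse: if `D ≠ 0`, the triple shift moves the point `f w • v - f v • w`. -/
lemma tripleShift_ne_self (u v w : V3) (f g h μ φ : V3 →ₗ[ℝ] ℝ)
    (hfu : f u = 0) (hgv : g v = 0) (hhw : h w = 0)
    (hfv : f v ≠ 0) (hfw : f w ≠ 0) (hgu : g u ≠ 0) (hgw : g w ≠ 0)
    (hhu : h u ≠ 0) (hhv : h v ≠ 0)
    (hmu : μ u ≠ 0) (hmv : μ v ≠ 0) (hmw : μ w ≠ 0)
    (hφu : φ u = 1) (hφv : φ v = 0) (hφw : φ w = 0)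
    (hAm : f v * μ w - f w * μ v ≠ 0)
    (hD : f v * g w * h u + f w * g u * h v ≠ 0) :
    shiftPt (projLine w u) (LinearMap.ker μ) (LinearMap.ker f)
      (shiftPt (projLine v w) (LinearMap.ker μ) (LinearMap.ker h)
        (shiftPt (projLine u v) (LinearMap.ker μ) (LinearMap.ker g)
          (Submodule.span ℝ {f w • v - f v • w}))) ≠
      Submodule.span ℝ {f w • v - f v • w} := by
  have hq1 : g (μ v • u - μ u • v) ≠ 0 := by
    rw [map_sub, map_smul, map_smul, hgv, smul_eq_mul, smul_eq_mul, mul_zero, sub_zero]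
    exact mul_ne_zero hmv hgu
  have hq2 : h (μ w • v - μ v • w) ≠ 0 := by
    rw [map_sub, map_smul, map_smul, hhw, smul_eq_mul, smul_eq_mul, mul_zero, sub_zero]
    exact mul_ne_zero hmw hhv
  have hq3 : f (μ u • w - μ w • u) ≠ 0 := by
    rw [map_sub, map_smul, map_smul, hfu, smul_eq_mul, smul_eq_mul, mul_zero, sub_zero]
    exact mul_ne_zero hmu hfw
  rw [shiftPt_span' u v _ μ g hmu hq1, shiftPt_span' v w _ μ h hmv hq2,
    shiftPt_span' w u _ μ f hmw hq3]
  intro heq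
  set x : V3 := f w • v - f v • w with hxdef
  have hy3 :
      f (h (g x • (μ v • u - μ u • v) - g (μ v • u - μ u • v) • x) •
          (μ w • v - μ v • w) -
          h (μ w • v - μ v • w) •
            (g x • (μ v • u - μ u • v) - g (μ v • u - μ u • v) • x)) •
          (μ u • w - μ w • u) -
        f (μ u • w - μ w • u) •
          (h (g x • (μ v • u - μ u • v) - g (μ v • u - μ u • v) • x) •
            (μ w • v - μ v • w) -
            h (μ w • v - μ v • w) •
              (g x • (μ v • u - μ u • v) - g (μ v • u - μ u • v) • x)) ∈
        Submodule.span ℝ {x} := by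
    rw [← heq]
    exact Submodule.mem_span_singleton_self _
  obtain ⟨k, hk⟩ := Submodule.mem_span_singleton.1 hy3
  have h0 := congrArg φ hk.symm
  simp only [hxdef, map_sub, map_smul, map_add, smul_eq_mul, hfu, hgv, hhw,
    hφu, hφv, hφw] at h0
  have hzero : μ v * μ w * (f v * g w * h u + f w * g u * h v) *
      (f v * μ w - f w * μ v) = 0 := by linear_combination h0
  exact (mul_ne_zero (mul_ne_zero (mul_ne_zero hmv hmw) hD) hAm) hzero

lemma dualE_zero_left (x : V3) : dualE 0 x = 0 := by simp [dualE]

lemma wedgeE_smul_pair (p q : V3) (s t s' t' : ℝ) :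
    wedgeE (s • p + t • q) (s' • p + t' • q) = (s * t' - t * s') • wedgeE p q := by
  funext x y
  simp only [wedgeE, dualE_add_left, dualE_smul_left, Pi.smul_apply, smul_eq_mul]
  ring

lemma wedge_balance (p q r : V3) (s t : ℝ) :
    -(s • wedgeE p q) + t • wedgeE q r + wedgeE (s • p + t • r) q = 0 := by
  funext x y
  simp only [wedgeE, dualE_add_left, dualE_smul_left, Pi.smul_apply, smul_eq_mul,
    Pi.add_apply, Pi.neg_apply, Pi.zero_apply]
  ring

lemma wedge_comb (p q r : V3) (s t : ℝ) :
    s • wedgeE p q - t • wedgeE q r = wedgeE (s • p + t • r) q := by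
  funext x y
  simp only [wedgeE, dualE_add_left, dualE_smul_left, Pi.smul_apply, smul_eq_mul,
    Pi.sub_apply]
  ring

lemma wedgeE_smul_left (s : ℝ) (p q : V3) : wedgeE (s • p) q = s • wedgeE p q := by
  funext x y
  simp only [wedgeE, dualE_smul_left, Pi.smul_apply, smul_eq_mul]
  ring

lemma wedge_balance2 (p q r : V3) (s t : ℝ) :
    -(wedgeE (s • p) q) + wedgeE (t • q) r + wedgeE (s • p + t • r) q = 0 := by
  funext x y
  simp only [wedgeE, dualE_add_left, dualE_smul_left, Pi.smul_apply, smul_eq_mul,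
    Pi.add_apply, Pi.neg_apply, Pi.zero_apply]
  ring

lemma fvanish (vv p : V3) (f : V3 →ₗ[ℝ] ℝ) (a b : V3)
    (ha : f a = 0) (hb : f b = 0) (hfp : f p = 0) (hp : p ≠ 0)
    (h : wedgeE vv p = wedgeE a b) : f vv = 0 := by
  obtain ⟨wv, hw⟩ := exists_dual_vec f
  have h2 := congrFun (congrFun h p) wv
  simp only [wedgeE] at h2
  rw [dualE_comm p wv, dualE_comm vv wv, dualE_comm a wv, dualE_comm b wv,
    hw, hw, hw, hw, hfp, ha, hb] at h2
  have hpp : dualE p p ≠ 0 := dualE_self_ne hp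
  have : f vv * dualE p p = 0 := by linear_combination -h2
  exact (mul_eq_zero.1 this).resolve_right hpp

lemma wedgeE_ne_zero (p q : V3) (φ ψ : V3 →ₗ[ℝ] ℝ)
    (hφp : φ p = 1) (hφq : φ q = 0) (hψp : ψ p = 0) (hψq : ψ q = 1) :
    wedgeE p q ≠ 0 := by
  obtain ⟨vφ, hvφ⟩ := exists_dual_vec φ
  obtain ⟨vψ, hvψ⟩ := exists_dual_vec ψ
  intro h
  have h2 := congrFun (congrFun h vφ) vψ
  rw [wedgeE] at h2
  rw [dualE_comm p vφ, dualE_comm q vψ, dualE_comm p vψ, dualE_comm q vφ,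
    hvφ, hvψ, hvψ, hvφ, hφp, hψq, hψp, hφq] at h2
  norm_num at h2


lemma exists_gen {X : Submodule ℝ V3} (hX : Module.finrank ℝ X = 1) :
    ∃ x : V3, x ≠ 0 ∧ x ∈ X ∧ X = Submodule.span ℝ {x} := by
  obtain ⟨v, hv0, hv⟩ := finrank_eq_one_iff'.1 hX
  refine ⟨(v : V3), by simpa using hv0, v.2, le_antisymm ?_ ?_⟩
  · intro y hy
    obtain ⟨c, hc⟩ := hv ⟨y, hy⟩
    have : c • (v : V3) = y := congrArg Subtype.val hc
    exact this ▸ Submodule.smul_mem _ _ (Submodule.mem_span_singleton_self _)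
  · rw [Submodule.span_le, Set.singleton_subset_iff]
    exact v.2

open Fin.NatCast in
lemma shiftChain3 (C : FramedCycle 3) (ℓ : Submodule ℝ V3) (i : Fin 3) (X : Submodule ℝ V3) :
    shiftChain C ℓ i 3 X =
      shiftPt (edgeLn C (i + 2)) ℓ (C.L (i + 2 + 1))
        (shiftPt (edgeLn C (i + 1)) ℓ (C.L (i + 1 + 1))
          (shiftPt (edgeLn C i) ℓ (C.L (i + 1)) X)) := by
  show shiftPt (edgeLn C (i + ((2:ℕ):Fin 3))) ℓ (C.L (i + ((2:ℕ):Fin 3) + 1))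
      (shiftPt (edgeLn C (i + ((1:ℕ):Fin 3))) ℓ (C.L (i + ((1:ℕ):Fin 3) + 1))
        (shiftPt (edgeLn C (i + ((0:ℕ):Fin 3))) ℓ (C.L (i + ((0:ℕ):Fin 3) + 1)) X)) = _
  norm_num

/-- For a triangular framed cycle in general position the following are equivalent:
(a) the three framing lines are concurrent; (b) there is a nonzero equilibrium force-load;
(c) for every admissible auxiliary line `ℓ` all monodromy operators are trivial. -/
theorem stmt8 (C : FramedCycle 3) (hGP : GenPos C) :
    ((∃ x : V3, x ≠ 0 ∧ x ∈ C.L 0 ⊓ C.L 1 ⊓ C.L 2) ↔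
      (∃ F : CycleLoad 3, F.Valid C ∧ (∀ i, EqAt F i) ∧ F.Nonzero)) ∧
    ((∃ x : V3, x ≠ 0 ∧ x ∈ C.L 0 ⊓ C.L 1 ⊓ C.L 2) ↔
      (∀ ℓ : Submodule ℝ V3, Module.finrank ℝ ℓ = 2 → (∀ i, C.P i ∉ ℓ) →
        ∀ i : Fin 3, MonoTrivial C ℓ i)) := by
  obtain ⟨hrk, hdist, -, hPL4⟩ := hGP
  have h3 : Module.finrank ℝ V3 = 3 := by simp [Module.finrank_pi]
  have hsup : edgeLn C 0 ⊔ edgeLn C 1 = ⊤ := by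
    have hle : Module.finrank ℝ ↥(edgeLn C 0 ⊓ edgeLn C 1) ≤ 1 := by
      by_contra hlt
      push_neg at hlt
      have h1 : edgeLn C 0 ⊓ edgeLn C 1 = edgeLn C 0 :=
        Submodule.eq_of_le_of_finrank_le inf_le_left (by rw [hrk 0]; omega)
      have h2 : edgeLn C 0 ⊓ edgeLn C 1 = edgeLn C 1 :=
        Submodule.eq_of_le_of_finrank_le inf_le_right (by rw [hrk 1]; omega)
      exact hdist 0 1 (by decide) (h1 ▸ h2)
    have hsum := Submodule.finrank_sup_add_finrank_inf_eq (edgeLn C 0) (edgeLn C 1)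
    have hle3 : Module.finrank ℝ ↥(edgeLn C 0 ⊔ edgeLn C 1) ≤ 3 := by
      have := Submodule.finrank_le (edgeLn C 0 ⊔ edgeLn C 1)
      omega
    apply Submodule.eq_top_of_finrank_eq
    rw [hrk 0, hrk 1] at hsum
    omega
  have hspan : ⊤ ≤ Submodule.span ℝ (Set.range C.P) := by
    rw [← hsup]
    apply sup_le <;>
    · rw [edgeLn, projLine, Submodule.span_le]
      rintro x (rfl | rfl) <;> exact Submodule.subset_span (Set.mem_range_self _)
  let b : Basis (Fin 3) ℝ V3 := basisOfTopLeSpanOfCardEqFinrank C.P hspan (by simp [h3])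
  have hb : ∀ i, b i = C.P i := fun i => by
    simp [b, coe_basisOfTopLeSpanOfCardEqFinrank]
  -- the functionals cutting out the framing lines
  have hlam' : ∀ i, ∃ f : V3 →ₗ[ℝ] ℝ, LinearMap.ker f = C.L i :=
    fun i => exists_ker_eq _ (C.hL i)
  choose lam hlam using hlam'
  have hPi : ∀ i, lam i (C.P i) = 0 := fun i => by
    rw [← LinearMap.mem_ker, hlam]; exact C.hPL i
  have hA : lam 0 (C.P 1) ≠ 0 := by
    have := (hPL4 0).2
    rw [← hlam 0] at this
    simpa using fun h => this (LinearMap.mem_ker.2 h)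
  have hB : lam 0 (C.P 2) ≠ 0 := by
    have := (hPL4 0).1
    rw [← hlam 0] at this
    exact fun h => this (LinearMap.mem_ker.2 h)
  have hGu : lam 1 (C.P 0) ≠ 0 := by
    have := (hPL4 1).1
    rw [← hlam 1] at this
    simpa using fun h => this (LinearMap.mem_ker.2 h)
  have hGw : lam 1 (C.P 2) ≠ 0 := by
    have := (hPL4 1).2
    rw [← hlam 1] at this
    simpa using fun h => this (LinearMap.mem_ker.2 h)
  have hHv : lam 2 (C.P 1) ≠ 0 := by
    have := (hPL4 2).1
    rw [← hlam 2] at this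
    simpa using fun h => this (LinearMap.mem_ker.2 h)
  have hHu : lam 2 (C.P 0) ≠ 0 := by
    have := (hPL4 2).2
    rw [← hlam 2] at this
    simpa using fun h => this (LinearMap.mem_ker.2 h)
  set α := lam 0 (C.P 1) with hαd
  set β := lam 0 (C.P 2) with hβd
  set γ := lam 1 (C.P 0) with hγd
  set δ := lam 1 (C.P 2) with hδd
  set ε := lam 2 (C.P 1) with hεd
  set ζ := lam 2 (C.P 0) with hζd
  -- expansion of an arbitrary vector
  have hexp : ∀ x : V3, x = b.repr x 0 • C.P 0 + b.repr x 1 • C.P 1 + b.repr x 2 • C.P 2 := by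
    intro x
    have := Basis.sum_repr b x
    rw [Fin.sum_univ_three, hb 0, hb 1, hb 2] at this
    linear_combination (norm := module) -this
  have hco : ∀ i j : Fin 3, b.coord i (C.P j) = if j = i then 1 else 0 := fun i j => by
    rw [← hb j]
    simp [Basis.coord_apply, Basis.repr_self, Finsupp.single_apply]
  -- concurrency is equivalent to the determinant condition
  have hconc : (∃ x : V3, x ≠ 0 ∧ x ∈ C.L 0 ⊓ C.L 1 ⊓ C.L 2) ↔
      α * δ * ζ + β * γ * ε = 0 := by
    constructor
    · rintro ⟨x, hx0, ⟨⟨hx1, hx2⟩, hx3⟩⟩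
      rw [← hlam 0] at hx1
      rw [← hlam 1] at hx2
      rw [← hlam 2] at hx3
      simp only [SetLike.mem_coe, LinearMap.mem_ker] at hx1 hx2 hx3
      rw [hexp x] at hx1 hx2 hx3
      simp only [map_add, map_smul, smul_eq_mul, hPi 0, hPi 1, hPi 2] at hx1 hx2 hx3
      rw [← hαd, ← hβd] at hx1
      rw [← hγd, ← hδd] at hx2
      rw [← hεd, ← hζd] at hx3
      have ha2 : b.repr x 2 ≠ 0 := by
        intro h2
        apply hx0
        rw [hexp x]
        rw [h2] at hx1 hx2 ⊢
        have hb1 : b.repr x 1 = 0 := by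
          rcases mul_eq_zero.1 (by linear_combination hx1 : b.repr x 1 * α = 0) with h | h
          · exact h
          · exact absurd h hA
        have hb0 : b.repr x 0 = 0 := by
          rcases mul_eq_zero.1 (by linear_combination hx2 : b.repr x 0 * γ = 0) with h | h
          · exact h
          · exact absurd h hGu
        rw [hb0, hb1]
        simp
      have hc : b.repr x 2 * (α * δ * ζ + β * γ * ε) = 0 := by
        linear_combination (α * ζ) * hx2 + (γ * ε) * hx1 - (α * γ) * hx3
      exact (mul_eq_zero.1 hc).resolve_left ha2
    · intro hD
      refine ⟨(-(α * δ)) • C.P 0 + (-(β * γ)) • C.P 1 + (α * γ) • C.P 2, ?_, ⟨⟨?_, ?_⟩, ?_⟩⟩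
      · intro h0
        have := congrArg (b.coord 2) h0
        rw [← hb 0, ← hb 1, ← hb 2] at this
        simp only [map_add, map_smul, Basis.coord_apply, Basis.repr_self, smul_eq_mul,
          map_zero] at this
        simp [Finsupp.single_apply] at this
        rcases this with h | h
        · exact hA h
        · exact hGu h
      · rw [← hlam 0]
        simp only [SetLike.mem_coe, LinearMap.mem_ker]
        simp only [map_add, map_smul, smul_eq_mul, hPi 0, ← hαd, ← hβd]
        ring
      · rw [← hlam 1]
        simp only [SetLike.mem_coe, LinearMap.mem_ker]
        simp only [map_add, map_smul, smul_eq_mul, hPi 1, ← hγd, ← hδd]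
        ring
      · rw [← hlam 2]
        simp only [SetLike.mem_coe, LinearMap.mem_ker]
        simp only [map_add, map_smul, smul_eq_mul, hPi 2, ← hεd, ← hζd]
        linear_combination -hD
  -- ====== part (b) ======
  have iff1 : (∃ x : V3, x ≠ 0 ∧ x ∈ C.L 0 ⊓ C.L 1 ⊓ C.L 2) ↔
      (∃ F : CycleLoad 3, F.Valid C ∧ (∀ i, EqAt F i) ∧ F.Nonzero) := by
    rw [hconc]
    constructor
    · intro hD
      set t : Fin 3 → ℝ := ![β * δ, -(β * γ), -(α * δ)] with htd
      refine ⟨⟨fun i => wedgeE (t i • C.P i) (C.P (i + 1)),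
        fun i => wedgeE (t (i - 1) • C.P (i - 1) + t i • C.P (i + 1)) (C.P i)⟩,
        ⟨fun i => ?_, fun i => ?_⟩, fun i => ?_, Or.inl ⟨0, ?_⟩⟩
      · exact ⟨t i • C.P i, C.P (i + 1),
          Submodule.smul_mem _ _ (Submodule.subset_span (by simp)),
          Submodule.subset_span (by simp), rfl⟩
      · refine ⟨t (i - 1) • C.P (i - 1) + t i • C.P (i + 1), C.P i, ?_, C.hPL i, rfl⟩
        rw [← hlam i]
        simp only [SetLike.mem_coe, LinearMap.mem_ker, map_add, map_smul, smul_eq_mul]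
        fin_cases i
        · show t 2 * lam 0 (C.P 2) + t 0 * lam 0 (C.P 1) = 0
          rw [show t 2 = -(α * δ) from rfl, show t 0 = β * δ from rfl, ← hαd, ← hβd]
          ring
        · show t 0 * lam 1 (C.P 0) + t 1 * lam 1 (C.P 2) = 0
          rw [show t 0 = β * δ from rfl, show t 1 = -(β * γ) from rfl, ← hγd, ← hδd]
          ring
        · show t 1 * lam 2 (C.P 1) + t 2 * lam 2 (C.P 0) = 0
          rw [show t 1 = -(β * γ) from rfl, show t 2 = -(α * δ) from rfl, ← hεd, ← hζd]
          linear_combination -hD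
      · show EqAt _ i
        rw [EqAt]
        fin_cases i
        · exact wedge_balance2 (C.P 2) (C.P 0) (C.P 1) (t 2) (t 0)
        · exact wedge_balance2 (C.P 0) (C.P 1) (C.P 2) (t 0) (t 1)
        · exact wedge_balance2 (C.P 1) (C.P 2) (C.P 0) (t 1) (t 2)
      · show wedgeE (t 0 • C.P 0) (C.P 1) ≠ 0
        rw [wedgeE_smul_left]
        have hW : wedgeE (C.P 0) (C.P 1) ≠ 0 := by
          apply wedgeE_ne_zero _ _ (b.coord 0) (b.coord 1) <;> simp [hco]
        intro h0
        rcases smul_eq_zero.1 h0 with h | h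
        · exact (mul_ne_zero hB hGw) h
        · exact hW h
    · rintro ⟨F, ⟨hVe, hVf⟩, hEq, hNz⟩
      have hrep : ∀ i, ∃ ti : ℝ, F.Fe i = ti • wedgeE (C.P i) (C.P (i + 1)) := by
        intro i
        obtain ⟨a, bb, ha, hbb, hF⟩ := hVe i
        rw [edgeLn, projLine] at ha hbb
        obtain ⟨s, tt, hst⟩ := Submodule.mem_span_pair.1 ha
        obtain ⟨s', tt', hst'⟩ := Submodule.mem_span_pair.1 hbb
        exact ⟨s * tt' - tt * s', by rw [hF, ← hst, ← hst', wedgeE_smul_pair]⟩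
      choose t ht using hrep
      have hFf : ∀ i, F.Ff i = wedgeE (t (i - 1) • C.P (i - 1) + t i • C.P (i + 1)) (C.P i) := by
        intro i
        have h0 := hEq i
        rw [EqAt] at h0
        have h1 : F.Ff i = F.Fe (i - 1) - F.Fe i := by linear_combination h0
        rw [h1, ht, ht, ← wedge_comb]
        congr 2
        · congr 1
          fin_cases i <;> rfl
      have hlv : ∀ i, lam i (t (i - 1) • C.P (i - 1) + t i • C.P (i + 1)) = 0 := by
        intro i
        obtain ⟨a, bb, ha, hbb, hF⟩ := hVf i
        rw [← hlam i] at ha hbb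
        exact fvanish _ _ (lam i) a bb ha hbb (hPi i) (C.hP i) ((hFf i).symm.trans hF)
      have eq0 : t 0 * α + t 2 * β = 0 := by
        have := hlv 0
        simp only [map_add, map_smul, smul_eq_mul] at this
        rw [show ((0:Fin 3) - 1) = 2 from rfl, show ((0:Fin 3) + 1) = 1 from rfl,
          ← hαd, ← hβd] at this
        linear_combination this
      have eq1 : t 0 * γ + t 1 * δ = 0 := by
        have := hlv 1
        simp only [map_add, map_smul, smul_eq_mul] at this
        rw [show ((1:Fin 3) - 1) = 0 from rfl, show ((1:Fin 3) + 1) = 2 from rfl,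
          ← hγd, ← hδd] at this
        linear_combination this
      have eq2 : t 1 * ε + t 2 * ζ = 0 := by
        have := hlv 2
        simp only [map_add, map_smul, smul_eq_mul] at this
        rw [show ((2:Fin 3) - 1) = 1 from rfl, show ((2:Fin 3) + 1) = 0 from rfl,
          ← hεd, ← hζd] at this
        linear_combination this
      have hex : ∃ j, t j ≠ 0 := by
        by_contra hall
        push_neg at hall
        have hFe0 : ∀ i, F.Fe i = 0 := fun i => by rw [ht i, hall i, zero_smul]
        have hFf0 : ∀ i, F.Ff i = 0 := fun i => by
          rw [hFf i, hall, hall, zero_smul, zero_smul, add_zero]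
          funext x y
          simp [wedgeE, dualE_zero_left]
        rcases hNz with ⟨i, hi⟩ | ⟨i, hi⟩
        · exact hi (hFe0 i)
        · exact hi (hFf0 i)
      have ht0 : t 0 ≠ 0 := by
        obtain ⟨j, hj⟩ := hex
        fin_cases j
        · exact hj
        · intro h0
          apply hj
          rw [h0] at eq1
          rcases mul_eq_zero.1 (by linear_combination eq1 : t 1 * δ = 0) with h | h
          · exact h
          · exact absurd h hGw
        · intro h0
          apply hj
          rw [h0] at eq0
          rcases mul_eq_zero.1 (by linear_combination eq0 : t 2 * β = 0) with h | h
          · exact h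
          · exact absurd h hB
      have ht2 : t 2 ≠ 0 := by
        intro h0
        apply ht0
        rw [h0] at eq0
        rcases mul_eq_zero.1 (by linear_combination eq0 : t 0 * α = 0) with h | h
        · exact h
        · exact absurd h hA
      have ht1 : t 1 ≠ 0 := by
        intro h0
        apply ht0
        rw [h0] at eq1
        rcases mul_eq_zero.1 (by linear_combination eq1 : t 0 * γ = 0) with h | h
        · exact h
        · exact absurd h hGu
      have hbig : t 0 * t 1 * t 2 * (α * δ * ζ + β * γ * ε) = 0 := by
        linear_combination (t 0 * t 2 * α * ζ) * eq1 + (t 0 * t 2 * β * γ) * eq2 -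
          (t 0 * t 2 * γ * ζ) * eq0
      rcases mul_eq_zero.1 hbig with h | h
      · exact absurd h (mul_ne_zero (mul_ne_zero ht0 ht1) ht2)
      · exact h
  -- ====== part (c) ======
  have iff2 : (∃ x : V3, x ≠ 0 ∧ x ∈ C.L 0 ⊓ C.L 1 ⊓ C.L 2) ↔
      (∀ ℓ : Submodule ℝ V3, Module.finrank ℝ ℓ = 2 → (∀ i, C.P i ∉ ℓ) →
        ∀ i : Fin 3, MonoTrivial C ℓ i) := by
    rw [hconc]
    constructor
    · intro hD ℓ hℓrk hPnotin i
      obtain ⟨mu, hmu⟩ := exists_ker_eq ℓ hℓrk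
      have hmuP : ∀ j, mu (C.P j) ≠ 0 := fun j h =>
        hPnotin j (hmu ▸ LinearMap.mem_ker.2 h)
      intro X hXle hXrk
      obtain ⟨x, hx0, hxX, hXeq⟩ := exists_gen hXrk
      have hxL := hXle hxX
      rw [shiftChain3, hXeq]
      fin_cases i
      · have hx0eq : lam 0 x = 0 := by
          have h' : x ∈ LinearMap.ker (lam 0) := by rw [hlam 0]; exact hxL
          exact LinearMap.mem_ker.1 h'
        have hbc0 : lam 0 (C.P 1) * b.repr x 1 + lam 0 (C.P 2) * b.repr x 2 = 0 := by
          rw [hexp x] at hx0eq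
          simp only [map_add, map_smul, smul_eq_mul, hPi 0] at hx0eq
          linear_combination hx0eq
        show shiftPt (projLine (C.P 2) (C.P 0)) ℓ (C.L 0)
          (shiftPt (projLine (C.P 1) (C.P 2)) ℓ (C.L 2)
            (shiftPt (projLine (C.P 0) (C.P 1)) ℓ (C.L 1) (Submodule.span ℝ {x}))) =
          Submodule.span ℝ {x}
        rw [← hmu, ← hlam 0, ← hlam 1, ← hlam 2, ]
        exact tripleShift_eq_self (C.P 0) (C.P 1) (C.P 2) x (lam 0) (lam 1) (lam 2) mu
          (hPi 0) (hPi 1) (hPi 2) hA hB hGu hGw hHu hHv (hmuP 0) (hmuP 1) (hmuP 2)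
          (by rw [← hαd, ← hβd, ← hγd, ← hδd, ← hεd, ← hζd]; linear_combination hD)
          (b.repr x 0) (b.repr x 1) (b.repr x 2) (hexp x) hbc0
      · have hx0eq : lam 1 x = 0 := by
          have h' : x ∈ LinearMap.ker (lam 1) := by rw [hlam 1]; exact hxL
          exact LinearMap.mem_ker.1 h'
        have hbc0 : lam 1 (C.P 2) * b.repr x 2 + lam 1 (C.P 0) * b.repr x 0 = 0 := by
          rw [hexp x] at hx0eq
          simp only [map_add, map_smul, smul_eq_mul, hPi 1] at hx0eq
          linear_combination hx0eq
        show shiftPt (projLine (C.P 0) (C.P 1)) ℓ (C.L 1)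
          (shiftPt (projLine (C.P 2) (C.P 0)) ℓ (C.L 0)
            (shiftPt (projLine (C.P 1) (C.P 2)) ℓ (C.L 2) (Submodule.span ℝ {x}))) =
          Submodule.span ℝ {x}
        rw [← hmu, ← hlam 0, ← hlam 1, ← hlam 2, ]
        exact tripleShift_eq_self (C.P 1) (C.P 2) (C.P 0) x (lam 1) (lam 2) (lam 0) mu
          (hPi 1) (hPi 2) (hPi 0) hGw hGu hHv hHu hA hB (hmuP 1) (hmuP 2) (hmuP 0)
          (by rw [← hαd, ← hβd, ← hγd, ← hδd, ← hεd, ← hζd]; linear_combination hD)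
          (b.repr x 1) (b.repr x 2) (b.repr x 0)
          (by have := hexp x; linear_combination (norm := module) this) hbc0
      · have hx0eq : lam 2 x = 0 := by
          have h' : x ∈ LinearMap.ker (lam 2) := by rw [hlam 2]; exact hxL
          exact LinearMap.mem_ker.1 h'
        have hbc0 : lam 2 (C.P 0) * b.repr x 0 + lam 2 (C.P 1) * b.repr x 1 = 0 := by
          rw [hexp x] at hx0eq
          simp only [map_add, map_smul, smul_eq_mul, hPi 2] at hx0eq
          linear_combination hx0eq
        show shiftPt (projLine (C.P 1) (C.P 2)) ℓ (C.L 2)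
          (shiftPt (projLine (C.P 0) (C.P 1)) ℓ (C.L 1)
            (shiftPt (projLine (C.P 2) (C.P 0)) ℓ (C.L 0) (Submodule.span ℝ {x}))) =
          Submodule.span ℝ {x}
        rw [← hmu, ← hlam 0, ← hlam 1, ← hlam 2, ]
        exact tripleShift_eq_self (C.P 2) (C.P 0) (C.P 1) x (lam 2) (lam 0) (lam 1) mu
          (hPi 2) (hPi 0) (hPi 1) hHu hHv hB hA hGw hGu (hmuP 2) (hmuP 0) (hmuP 1)
          (by rw [← hαd, ← hβd, ← hγd, ← hδd, ← hεd, ← hζd]; linear_combination hD)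
          (b.repr x 2) (b.repr x 0) (b.repr x 1)
          (by have := hexp x; linear_combination (norm := module) this) hbc0
    · intro hMT
      by_contra hD
      set mu : V3 →ₗ[ℝ] ℝ := b.coord 0 + β⁻¹ • b.coord 1 + (2 * α⁻¹) • b.coord 2 with hmud
      have hmu0 : mu (C.P 0) = 1 := by simp [hmud, hco]
      have hmu1 : mu (C.P 1) = β⁻¹ := by simp [hmud, hco]
      have hmu2 : mu (C.P 2) = 2 * α⁻¹ := by simp [hmud, hco]
      have hmuP : ∀ j, mu (C.P j) ≠ 0 := by
        intro j
        fin_cases j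
        · show mu (C.P 0) ≠ 0
          rw [hmu0]; norm_num
        · show mu (C.P 1) ≠ 0
          rw [hmu1]; exact inv_ne_zero hB
        · show mu (C.P 2) ≠ 0
          rw [hmu2]; exact mul_ne_zero two_ne_zero (inv_ne_zero hA)
      have hrkker : Module.finrank ℝ (LinearMap.ker mu) = 2 := by
        have hsurj : Function.Surjective mu := fun r =>
          ⟨r • C.P 0, by rw [map_smul, hmu0, smul_eq_mul, mul_one]⟩
        have hrt := LinearMap.finrank_range_add_finrank_ker mu
        rw [LinearMap.range_eq_top.2 hsurj, finrank_top, h3] at hrt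
        have : Module.finrank ℝ ℝ = 1 := Module.finrank_self ℝ
        omega
      have hPno : ∀ j, C.P j ∉ LinearMap.ker mu := fun j h =>
        hmuP j (LinearMap.mem_ker.1 h)
      have hMT0 := hMT (LinearMap.ker mu) hrkker hPno 0
      set x : V3 := β • C.P 1 - α • C.P 2 with hxd
      have hx0 : x ≠ 0 := by
        intro h0
        have := congrArg (b.coord 1) h0
        rw [hxd] at this
        simp only [map_sub, map_smul, smul_eq_mul, hco, map_zero,
          show ((1:Fin 3) = 1) = True from by simp,
          show ((2:Fin 3) = 1) = False from by decide,
          if_true, if_false, mul_one, mul_zero, sub_zero] at this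
        exact hB this
      have hxle : Submodule.span ℝ {x} ≤ C.L 0 := by
        rw [Submodule.span_le, Set.singleton_subset_iff, ← hlam 0, hxd]
        simp only [SetLike.mem_coe, LinearMap.mem_ker, map_sub, map_smul, smul_eq_mul,
          ← hαd, ← hβd]
        ring
      have hchain := hMT0 (Submodule.span ℝ {x}) hxle (finrank_span_singleton hx0)
      rw [shiftChain3] at hchain
      have hchain' : shiftPt (projLine (C.P 2) (C.P 0)) (LinearMap.ker mu) (C.L 0)
          (shiftPt (projLine (C.P 1) (C.P 2)) (LinearMap.ker mu) (C.L 2)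
            (shiftPt (projLine (C.P 0) (C.P 1)) (LinearMap.ker mu) (C.L 1)
              (Submodule.span ℝ {x}))) = Submodule.span ℝ {x} := hchain
      rw [← hlam 0, ← hlam 1, ← hlam 2, ] at hchain'
      refine tripleShift_ne_self (C.P 0) (C.P 1) (C.P 2) (lam 0) (lam 1) (lam 2) mu
        (b.coord 0) (hPi 0) (hPi 1) (hPi 2) hA hB hGu hGw hHu hHv
        (hmuP 0) (hmuP 1) (hmuP 2) ?_ ?_ ?_ ?_ ?_ ?_
      · simp [hco]
      · simp [hco]
      · simp [hco]
      · rw [hmu1, hmu2, ← hαd, ← hβd]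
        have h1 : α * (2 * α⁻¹) - β * β⁻¹ = 1 := by field_simp; norm_num
        rw [h1]
        norm_num
      · intro h0
        apply hD
        rw [← hαd, ← hβd, ← hγd, ← hδd, ← hεd, ← hζd] at h0
        linear_combination h0
      · exact hchain'
  exact ⟨iff1, iff2⟩
end
end

section
/- Let p₁, p₂, p₃ be three non-collinear points in ℝP² (with representative vectors in ℝ³), and suppose the lines ℓ₁, ℓ₂, ℓ₃ through p₁, p₂, p₃ respectively all pass through a common point B. Then there exist nonzero real numbers a₁, a₂, a₃ and α ≠ 0 with dB = α(a₁dp₁ + a₂dp₂ + a₃dp₃), and setting Fᵢ = aᵢ dpᵢ ∧ dB and F_{i,j} = −α aᵢaⱼ dpᵢ ∧ dpⱼ yields a nonzero equilibrium force-load: F_{i,i+1} + F_{i+1,i} = 0 for all edges and Fᵢ + F_{i,i−1} + F_{i,i+1} = 0 at every vertex. -/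
open scoped Classical

noncomputable section

lemma dualE_add (u v : V3) (z : V3) : dualE (u + v) z = dualE u z + dualE v z := by
  simp [dualE, add_mul, Finset.sum_add_distrib]

lemma dualE_smul (c : ℝ) (u : V3) (z : V3) : dualE (c • u) z = c * dualE u z := by
  simp [dualE, Finset.mul_sum, mul_assoc]

lemma dualE_single (a : V3) (i : Fin 3) : dualE a (Pi.single i 1) = a i := by
  simp [dualE, Pi.single_apply]

/-- Vertex equilibrium identity, generic form. -/
lemma vertexEq (q r s B : V3) (aq ar as : ℝ)
    (hB : ∀ z, dualE B z = aq * dualE q z + ar * dualE r z + as * dualE s z) :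
    aq • wedgeE q B + (-(1 * aq * ar)) • wedgeE q r + (-(1 * aq * as)) • wedgeE q s
      = (0 : Form) := by
  funext x y
  simp only [Pi.add_apply, Pi.smul_apply, smul_eq_mul, Pi.zero_apply, wedgeE, hB x, hB y]
  ring

/-- For a framed triangle with non-collinear vertices `p 0, p 1, p 2` whose framing lines all
pass through a common point `B` (not lying on any of the three edge lines), there are nonzero
`a i` and `α ≠ 0` with `dB = α (a₀ dp₀ + a₁ dp₁ + a₂ dp₂)`, and the forces
`Fᵢ = aᵢ dpᵢ ∧ dB`, `F_{i,j} = −α aᵢ aⱼ dpᵢ ∧ dpⱼ` form a nonzero equilibrium force-load. -/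
theorem stmt9 (p : Fin 3 → V3) (B : V3)
    (hind : LinearIndependent ℝ ![p 0, p 1, p 2]) (hB : B ≠ 0)
    (hB01 : B ∉ projLine (p 0) (p 1)) (hB02 : B ∉ projLine (p 0) (p 2))
    (hB12 : B ∉ projLine (p 1) (p 2)) :
    ∃ (a : Fin 3 → ℝ) (α : ℝ), (∀ i, a i ≠ 0) ∧ α ≠ 0 ∧
      B = α • (a 0 • p 0 + a 1 • p 1 + a 2 • p 2) ∧
      (∀ i j : Fin 3,
        (-(α * a i * a j)) • wedgeE (p i) (p j) + (-(α * a j * a i)) • wedgeE (p j) (p i)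
          = (0 : Form)) ∧
      (∀ i : Fin 3,
        a i • wedgeE (p i) B + (-(α * a i * a (i - 1))) • wedgeE (p i) (p (i - 1))
          + (-(α * a i * a (i + 1))) • wedgeE (p i) (p (i + 1)) = (0 : Form)) ∧
      a 0 • wedgeE (p 0) B ≠ (0 : Form) := by
  have hp : ![p 0, p 1, p 2] = p := by funext i; fin_cases i <;> rfl
  rw [hp] at hind
  have hcard : Fintype.card (Fin 3) = Module.finrank ℝ V3 := by simp
  let b := basisOfLinearIndependentOfCardEqFinrank hind hcard
  have hb : ∀ i, b i = p i := fun i => by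
    simp [b, coe_basisOfLinearIndependentOfCardEqFinrank]
  set a : Fin 3 → ℝ := fun i => b.repr B i with ha
  have hBsum : B = a 0 • p 0 + a 1 • p 1 + a 2 • p 2 := by
    have := (b.sum_repr B).symm
    rw [Fin.sum_univ_three, hb 0, hb 1, hb 2] at this
    exact this
  -- membership helpers
  have mem01 : ∀ c d : ℝ, c • p 0 + d • p 1 ∈ projLine (p 0) (p 1) := by
    intro c d
    exact Submodule.add_mem _
      (Submodule.smul_mem _ _ (Submodule.subset_span (by simp)))
      (Submodule.smul_mem _ _ (Submodule.subset_span (by simp)))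
  have mem02 : ∀ c d : ℝ, c • p 0 + d • p 2 ∈ projLine (p 0) (p 2) := by
    intro c d
    exact Submodule.add_mem _
      (Submodule.smul_mem _ _ (Submodule.subset_span (by simp)))
      (Submodule.smul_mem _ _ (Submodule.subset_span (by simp)))
  have mem12 : ∀ c d : ℝ, c • p 1 + d • p 2 ∈ projLine (p 1) (p 2) := by
    intro c d
    exact Submodule.add_mem _
      (Submodule.smul_mem _ _ (Submodule.subset_span (by simp)))
      (Submodule.smul_mem _ _ (Submodule.subset_span (by simp)))
  have ha0 : a 0 ≠ 0 := by
    intro h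
    apply hB12
    rw [hBsum, h, zero_smul, zero_add]
    exact mem12 _ _
  have ha1 : a 1 ≠ 0 := by
    intro h
    apply hB02
    rw [hBsum, h, zero_smul, add_zero]
    exact mem02 _ _
  have ha2 : a 2 ≠ 0 := by
    intro h
    apply hB01
    rw [hBsum, h, zero_smul, add_zero]
    exact mem01 _ _
  have hanz : ∀ i, a i ≠ 0 := by
    intro i; fin_cases i <;> assumption
  have hdB : ∀ z, dualE B z
      = a 0 * dualE (p 0) z + a 1 * dualE (p 1) z + a 2 * dualE (p 2) z := by
    intro z
    rw [hBsum, dualE_add, dualE_add, dualE_smul, dualE_smul, dualE_smul]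
  refine ⟨a, 1, hanz, one_ne_zero, by rw [one_smul]; exact hBsum, ?_, ?_, ?_⟩
  · intro i j
    funext x y
    simp only [Pi.add_apply, Pi.smul_apply, smul_eq_mul, Pi.zero_apply, wedgeE]
    ring
  · intro i
    fin_cases i
    · have h01 : ((0 : Fin 3) - 1) = 2 := by decide
      have h02 : ((0 : Fin 3) + 1) = 1 := by decide
      have := vertexEq (p 0) (p 2) (p 1) B (a 0) (a 2) (a 1)
        (fun z => by rw [hdB z]; ring)
      simpa [h01, h02] using this
    · have h11 : ((1 : Fin 3) - 1) = 0 := by decide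
      have h12 : ((1 : Fin 3) + 1) = 2 := by decide
      have := vertexEq (p 1) (p 0) (p 2) B (a 1) (a 0) (a 2)
        (fun z => by rw [hdB z]; ring)
      simpa [h11, h12] using this
    · have h21 : ((2 : Fin 3) - 1) = 1 := by decide
      have h22 : ((2 : Fin 3) + 1) = 0 := by decide
      have := vertexEq (p 2) (p 1) (p 0) B (a 2) (a 1) (a 0)
        (fun z => by rw [hdB z]; ring)
      simpa [h21, h22] using this
  · -- nonzero
    intro h0
    have hw : wedgeE (p 0) B = 0 := by
      funext x y
      have := congrFun (congrFun h0 x) y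
      simp only [Pi.smul_apply, smul_eq_mul, Pi.zero_apply] at this
      have := mul_eq_zero.mp this
      rcases this with h | h
      · exact absurd h ha0
      · simpa using h
    have hp0 : p 0 ≠ 0 := by
      have := hind.ne_zero 0
      simpa using this
    obtain ⟨k, hk⟩ : ∃ k, p 0 k ≠ 0 := by
      by_contra hc
      push_neg at hc
      exact hp0 (funext hc)
    have hminor : ∀ i : Fin 3, p 0 i * B k - p 0 k * B i = 0 := by
      intro i
      have := congrFun (congrFun hw (Pi.single i 1)) (Pi.single k 1)
      simpa [wedgeE, dualE_single] using this
    have hBc : B = (B k / p 0 k) • p 0 := by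
      funext i
      have := hminor i
      rw [Pi.smul_apply, smul_eq_mul, div_mul_eq_mul_div, eq_div_iff hk]
      nlinarith [hminor i]
    apply hB01
    rw [hBc]
    exact Submodule.smul_mem _ _ (Submodule.subset_span (by simp))
end
end

section
/- Let C(P,L) be a framed cycle in general position on k ≥ 4 vertices and let ω_i be the projection operation at index i, producing the framed cycle C(P',L') with pᵢ' = p_{i−1}pᵢ ∩ p_{i+1}p_{i+2} and ℓᵢ' = the line through pᵢ' and ℓᵢ ∩ ℓ_{i+1}. Then the cycle C(P',L') is again a framed cycle in general position (on k−1 vertices). -/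
open scoped Classical
open Fin.NatCast

noncomputable section

namespace Stmt10Aux

lemma span_pair_le {a b : V3} {W : Submodule ℝ V3} (ha : a ∈ W) (hb : b ∈ W) :
    Submodule.span ℝ {a, b} ≤ W := by
  rw [Submodule.span_le, Set.insert_subset_iff, Set.singleton_subset_iff]
  exact ⟨ha, hb⟩

lemma span_singleton_swap {x y : V3} (hx : x ≠ 0) (h : x ∈ Submodule.span ℝ {y}) :
    y ∈ Submodule.span ℝ {x} := by
  obtain ⟨c, hc⟩ := Submodule.mem_span_singleton.1 h
  have hc0 : c ≠ 0 := by rintro rfl; rw [zero_smul] at hc; exact hx hc.symm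
  rw [Submodule.mem_span_singleton]
  exact ⟨c⁻¹, by rw [← hc, inv_smul_smul₀ hc0]⟩

lemma finrank_span_pair {a b : V3} (h0 : a ≠ 0) (hnb : b ∉ Submodule.span ℝ {a}) :
    Module.finrank ℝ (Submodule.span ℝ ({a, b} : Set V3)) = 2 := by
  have hlt : Submodule.span ℝ {a} < Submodule.span ℝ ({a, b} : Set V3) := by
    refine lt_of_le_of_ne (Submodule.span_mono (by simp)) fun h => hnb ?_
    rw [h]; exact Submodule.subset_span (by simp)
  have h2 : 1 < Module.finrank ℝ (Submodule.span ℝ ({a, b} : Set V3)) := by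
    have := Submodule.finrank_lt_finrank_of_lt hlt
    rwa [finrank_span_singleton h0] at this
  have h3 : Module.finrank ℝ (Submodule.span ℝ ({a, b} : Set V3)) ≤ 2 := by
    rw [show ({a, b} : Set V3) = insert a {b} from rfl, Submodule.span_insert]
    have hb1 : Module.finrank ℝ (Submodule.span ℝ ({b} : Set V3)) ≤ 1 := by
      by_cases hb : b = 0
      · subst hb; rw [Submodule.span_zero_singleton]; simp
      · rw [finrank_span_singleton hb]
    have := Submodule.finrank_sup_add_finrank_inf_eq (Submodule.span ℝ ({a} : Set V3))
      (Submodule.span ℝ ({b} : Set V3))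
    have ha1 : Module.finrank ℝ (Submodule.span ℝ ({a} : Set V3)) = 1 :=
      finrank_span_singleton h0
    omega
  omega

lemma projLine_eq_of {W : Submodule ℝ V3} (hW : Module.finrank ℝ W = 2) {a b : V3}
    (ha : a ∈ W) (hb : b ∈ W) (h0 : a ≠ 0) (hnb : b ∉ Submodule.span ℝ {a}) :
    projLine a b = W := by
  rw [projLine]
  exact Submodule.eq_of_le_of_finrank_eq (span_pair_le ha hb)
    (by rw [finrank_span_pair h0 hnb, hW])

lemma inf_eq_span_of_mem {U W : Submodule ℝ V3} (hU : Module.finrank ℝ U = 2)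
    (hW : Module.finrank ℝ W = 2) (hne : U ≠ W) {x : V3} (hx0 : x ≠ 0)
    (hxU : x ∈ U) (hxW : x ∈ W) : U ⊓ W = Submodule.span ℝ {x} := by
  have hle : Submodule.span ℝ {x} ≤ U ⊓ W := by
    rw [Submodule.span_le, Set.singleton_subset_iff]; exact ⟨hxU, hxW⟩
  have h1 : 1 ≤ Module.finrank ℝ (U ⊓ W : Submodule ℝ V3) := by
    have := Submodule.finrank_mono hle
    rwa [finrank_span_singleton hx0] at this
  have h2 : Module.finrank ℝ (U ⊓ W : Submodule ℝ V3) ≤ 2 := by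
    have := Submodule.finrank_mono (inf_le_left : U ⊓ W ≤ U)
    omega
  have h3 : Module.finrank ℝ (U ⊓ W : Submodule ℝ V3) ≠ 2 := by
    intro h
    have e1 : U ⊓ W = U := Submodule.eq_of_le_of_finrank_eq inf_le_left (by omega)
    have e2 : U ⊓ W = W := Submodule.eq_of_le_of_finrank_eq inf_le_right (by omega)
    exact hne (e1.symm.trans e2)
  exact (Submodule.eq_of_le_of_finrank_eq hle
    (by rw [finrank_span_singleton hx0]; omega)).symm

end Stmt10Aux

open Stmt10Aux

/-- The projection operation `ωᵢ` applied to a framed cycle in general position on `k+1 ≥ 4`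
vertices yields a framed cycle in general position on `k` vertices: the pair `pᵢ, p_{i+1}` is
replaced by `pᵢ' = p_{i−1}pᵢ ∩ p_{i+1}p_{i+2}`, framed by the line through `pᵢ'` and
`ℓᵢ ∩ ℓ_{i+1}` (the projected cycle is written starting from the new vertex `pᵢ'`). -/
theorem stmt10 (k : ℕ) (hk : 3 ≤ k) [NeZero k] (C : FramedCycle (k + 1)) (hGP : GenPos C)
    (i : Fin (k + 1)) (p' B' : V3) (hp'0 : p' ≠ 0) (hB'0 : B' ≠ 0)
    (hp' : Submodule.span ℝ {p'} =
      projLine (C.P (i - 1)) (C.P i) ⊓ projLine (C.P (i + 1)) (C.P (i + 2)))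
    (hB' : Submodule.span ℝ {B'} = C.L i ⊓ C.L (i + 1)) :
    ∃ C' : FramedCycle k,
      (∀ j : Fin k, C'.P j = if j = 0 then p' else C.P (i + 1 + ((j : ℕ) : Fin (k + 1)))) ∧
      (∀ j : Fin k, C'.L j =
        if j = 0 then projLine p' B' else C.L (i + 1 + ((j : ℕ) : Fin (k + 1)))) ∧
      GenPos C' := by
  obtain ⟨he2, hedist, hint, hfr⟩ := hGP
  -- ## index arithmetic in `Fin (k+1)`
  have hcast_ne : ∀ m n : ℕ, m < k + 1 → n < k + 1 → m ≠ n →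
      i + ((m : ℕ) : Fin (k+1)) ≠ i + ((n : ℕ) : Fin (k+1)) := by
    intro m n hm hn hmn h
    have h2 : ((m : ℕ) : Fin (k+1)) = ((n : ℕ) : Fin (k+1)) := by
      exact add_left_cancel h
    have h3 := congrArg Fin.val h2
    rw [Fin.val_natCast, Fin.val_natCast, Nat.mod_eq_of_lt hm, Nat.mod_eq_of_lt hn] at h3
    exact hmn h3
  have e_i0 : i = i + ((0:ℕ) : Fin (k+1)) := by simp
  have e_i1 : i + 1 = i + ((1:ℕ) : Fin (k+1)) := by rw [Nat.cast_one]
  have e_i2 : i + 2 = i + ((2:ℕ) : Fin (k+1)) := by norm_num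
  have e_im1 : i - 1 = i + ((k:ℕ) : Fin (k+1)) := by
    rw [sub_eq_iff_eq_add, add_assoc, ← Nat.cast_add_one, Fin.natCast_self, add_zero]
  have e_im2 : i - 1 - 1 = i + (((k-1):ℕ) : Fin (k+1)) := by
    rw [e_im1, sub_eq_iff_eq_add, add_assoc, ← Nat.cast_add_one,
      show k - 1 + 1 = k from by omega]
  have hs1 : i - 1 + 1 = i := by rw [sub_add_cancel]
  have hs2 : i + 1 + 1 = i + 2 := by rw [add_assoc, one_add_one_eq_two]
  have hs3 : i - 1 - 1 + 1 = i - 1 := by rw [sub_add_cancel]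
  have hs4 : i + 1 - 1 = i := by rw [add_sub_cancel_right]
  have hs5 : i + 2 - 1 = i + 1 := by rw [← hs2, add_sub_cancel_right]
  have d1 : i - 1 ≠ i + 1 := by
    rw [e_im1, e_i1]; exact hcast_ne k 1 (by omega) (by omega) (by omega)
  have d2 : i + 1 ≠ i + 2 := by
    rw [e_i1, e_i2]; exact hcast_ne 1 2 (by omega) (by omega) (by omega)
  have d3 : i - 1 - 1 ≠ i - 1 := by
    rw [e_im2, e_im1]; exact hcast_ne (k-1) k (by omega) (by omega) (by omega)
  have d4 : i - 1 ≠ i + 2 := by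
    rw [e_im1, e_i2]; exact hcast_ne k 2 (by omega) (by omega) (by omega)
  have d5 : i - 1 - 1 ≠ i + 1 := by
    rw [e_im2, e_i1]; exact hcast_ne (k-1) 1 (by omega) (by omega) (by omega)
  have d6 : i ≠ i + 1 := by
    nth_rewrite 1 [e_i0]; rw [e_i1]; exact hcast_ne 0 1 (by omega) (by omega) (by omega)
  have d7 : i - 1 ≠ i := by
    nth_rewrite 2 [e_i0]; rw [e_im1]; exact hcast_ne k 0 (by omega) (by omega) (by omega)
  -- pair helpers
  have hpair : ∀ a b c d : Fin (k+1), a ≠ c → a ≠ d →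
      ({a, b} : Finset (Fin (k+1))) ≠ {c, d} := by
    intro a b c d h1 h2 h
    have ha : a ∈ ({c, d} : Finset (Fin (k+1))) := by rw [← h]; simp
    rw [Finset.mem_insert, Finset.mem_singleton] at ha
    tauto
  have hpair2 : ∀ a b c d : Fin (k+1), b ≠ c → b ≠ d →
      ({a, b} : Finset (Fin (k+1))) ≠ {c, d} := by
    intro a b c d h1 h2 h
    have hb : b ∈ ({c, d} : Finset (Fin (k+1))) := by rw [← h]; simp
    rw [Finset.mem_insert, Finset.mem_singleton] at hb
    tauto
  -- ## basic membership facts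
  have hPmem1 : ∀ m : Fin (k+1), C.P m ∈ edgeLn C m := by
    intro m
    show C.P m ∈ Submodule.span ℝ {C.P m, C.P (m+1)}
    exact Submodule.subset_span (Set.mem_insert _ _)
  have hPmem2 : ∀ m : Fin (k+1), C.P (m+1) ∈ edgeLn C m := by
    intro m
    show C.P (m+1) ∈ Submodule.span ℝ {C.P m, C.P (m+1)}
    exact Submodule.subset_span (Set.mem_insert_of_mem _ rfl)
  have hEm1 : edgeLn C (i - 1) = projLine (C.P (i-1)) (C.P i) := by
    unfold edgeLn; rw [hs1]
  have hE2 : edgeLn C (i + 1) = projLine (C.P (i+1)) (C.P (i+2)) := by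
    unfold edgeLn; rw [hs2]
  have hp'span : Submodule.span ℝ {p'} = edgeLn C (i-1) ⊓ edgeLn C (i+1) := by
    rw [hEm1, hE2]; exact hp'
  have hp'1 : p' ∈ edgeLn C (i-1) := by
    have : p' ∈ Submodule.span ℝ {p'} := Submodule.mem_span_singleton_self p'
    rw [hp'span] at this; exact (Submodule.mem_inf.1 this).1
  have hp'2 : p' ∈ edgeLn C (i+1) := by
    have : p' ∈ Submodule.span ℝ {p'} := Submodule.mem_span_singleton_self p'
    rw [hp'span] at this; exact (Submodule.mem_inf.1 this).2
  have hB'1 : B' ∈ C.L i := by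
    have : B' ∈ Submodule.span ℝ {B'} := Submodule.mem_span_singleton_self B'
    rw [hB'] at this; exact (Submodule.mem_inf.1 this).1
  have hB'2 : B' ∈ C.L (i+1) := by
    have : B' ∈ Submodule.span ℝ {B'} := Submodule.mem_span_singleton_self B'
    rw [hB'] at this; exact (Submodule.mem_inf.1 this).2
  -- a nonzero point on three pairwise "distinct-enough" edge lines is impossible
  have htriple : ∀ a b c : Fin (k+1), a ≠ b → b ≠ c →
      ({a, b} : Finset (Fin (k+1))) ≠ {b, c} → ∀ x : V3, x ≠ 0 →
      x ∈ edgeLn C a → x ∈ edgeLn C b → x ∈ edgeLn C c → False := by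
    intro a b c hab hbc hne x hx ha hb hc
    exact hint a b b c hab hbc hne
      ((inf_eq_span_of_mem (he2 a) (he2 b) (hedist a b hab) hx ha hb).trans
       (inf_eq_span_of_mem (he2 b) (he2 c) (hedist b c hbc) hx hb hc).symm)
  -- ## the key genericity facts
  have c1 : C.P (i+2) ∉ Submodule.span ℝ {p'} := by
    intro h
    rw [hp'span, Submodule.mem_inf] at h
    exact htriple (i-1) (i+1) (i+2) d1 d2 (hpair (i-1) (i+1) (i+1) (i+2) d1 d4) (C.P (i+2))
      (C.hP _) h.1 h.2 (hPmem1 (i+2))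
  have c2 : C.P (i-1) ∉ Submodule.span ℝ {p'} := by
    intro h
    rw [hp'span, Submodule.mem_inf] at h
    exact htriple (i-1-1) (i-1) (i+1) d3 d1 (hpair (i-1-1) (i-1) (i-1) (i+1) d3 d5) (C.P (i-1))
      (C.hP _) (by have := hPmem2 (i-1-1); rwa [hs3] at this) h.1 h.2
  have hPi_em1 : C.P i ∈ edgeLn C (i-1) := by have := hPmem2 (i-1); rwa [hs1] at this
  have c3 : p' ∉ C.L i := by
    intro h
    by_cases hc : C.P i ∈ Submodule.span ℝ {p'}
    · rw [hp'span, Submodule.mem_inf] at hc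
      exact htriple (i-1) i (i+1) d7 d6 (hpair (i-1) i i (i+1) d7 d1) (C.P i)
        (C.hP _) hc.1 (hPmem1 i) hc.2
    · have hnp : p' ∉ Submodule.span ℝ {C.P i} := fun hp =>
        hc (span_singleton_swap hp'0 hp)
      have h1 : projLine (C.P i) p' = C.L i :=
        projLine_eq_of (C.hL i) (C.hPL i) h (C.hP i) hnp
      have h2 : projLine (C.P i) p' = edgeLn C (i-1) :=
        projLine_eq_of (he2 (i-1)) hPi_em1 hp'1 (C.hP i) hnp
      exact (hfr i).1 (by rw [← h1, h2]; exact hPmem1 (i-1))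
  have c4 : p' ∉ C.L (i+1) := by
    intro h
    by_cases hc : C.P (i+1) ∈ Submodule.span ℝ {p'}
    · rw [hp'span, Submodule.mem_inf] at hc
      exact htriple (i-1) i (i+1) d7 d6 (hpair (i-1) i i (i+1) d7 d1) (C.P (i+1))
        (C.hP _) hc.1 (hPmem2 i) hc.2
    · have hnp : p' ∉ Submodule.span ℝ {C.P (i+1)} := fun hp =>
        hc (span_singleton_swap hp'0 hp)
      have h1 : projLine (C.P (i+1)) p' = C.L (i+1) :=
        projLine_eq_of (C.hL (i+1)) (C.hPL (i+1)) h (C.hP (i+1)) hnp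
      have h2 : projLine (C.P (i+1)) p' = edgeLn C (i+1) :=
        projLine_eq_of (he2 (i+1)) (hPmem1 (i+1)) hp'2 (C.hP (i+1)) hnp
      exact (hfr (i+1)).2 (by rw [← h1, h2]; exact hPmem2 (i+1))
  have c8 : p' ∉ C.L (i+2) := by
    intro h
    have hPi2_e : C.P (i+2) ∈ edgeLn C (i+1) := by rw [← hs2]; exact hPmem2 (i+1)
    have hnp : p' ∉ Submodule.span ℝ {C.P (i+2)} := fun hp =>
      c1 (span_singleton_swap hp'0 hp)
    have h1 : projLine (C.P (i+2)) p' = C.L (i+2) :=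
      projLine_eq_of (C.hL (i+2)) (C.hPL (i+2)) h (C.hP (i+2)) hnp
    have h2 : projLine (C.P (i+2)) p' = edgeLn C (i+1) :=
      projLine_eq_of (he2 (i+1)) hPi2_e hp'2 (C.hP (i+2)) hnp
    have : C.P (i+2-1) ∈ C.L (i+2) := by rw [← h1, h2, hs5]; exact hPmem1 (i+1)
    exact (hfr (i+2)).1 this
  have c9 : p' ∉ C.L (i-1) := by
    intro h
    have hnp : p' ∉ Submodule.span ℝ {C.P (i-1)} := fun hp =>
      c2 (span_singleton_swap hp'0 hp)
    have h1 : projLine (C.P (i-1)) p' = C.L (i-1) :=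
      projLine_eq_of (C.hL (i-1)) (C.hPL (i-1)) h (C.hP (i-1)) hnp
    have h2 : projLine (C.P (i-1)) p' = edgeLn C (i-1) :=
      projLine_eq_of (he2 (i-1)) (hPmem1 (i-1)) hp'1 (C.hP (i-1)) hnp
    exact (hfr (i-1)).2 (by rw [← h1, h2]; exact hPmem2 (i-1))
  have cB : B' ∉ Submodule.span ℝ {p'} := by
    intro h
    have : p' ∈ Submodule.span ℝ {B'} := span_singleton_swap hB'0 h
    rw [hB', Submodule.mem_inf] at this
    exact c3 this.1
  have c6 : C.P (i-1) ∉ Submodule.span ℝ ({p', B'} : Set V3) := by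
    intro h
    obtain ⟨a, b, hab⟩ := Submodule.mem_span_pair.1 h
    by_cases hb0 : b = 0
    · subst hb0
      exact c2 (Submodule.mem_span_singleton.2 ⟨a, by rw [← hab, zero_smul, add_zero]⟩)
    · have h1 : b • B' = C.P (i-1) - a • p' := by rw [← hab]; abel
      have hBe : B' ∈ edgeLn C (i-1) := by
        have : B' = b⁻¹ • (C.P (i-1) - a • p') := by rw [← h1, inv_smul_smul₀ hb0]
        rw [this]
        exact Submodule.smul_mem _ _ (Submodule.sub_mem _ (hPmem1 (i-1))
          (Submodule.smul_mem _ _ hp'1))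
      by_cases hc : C.P i ∈ Submodule.span ℝ {B'}
      · rw [hB', Submodule.mem_inf] at hc
        exact (hfr (i+1)).1 (by rw [hs4]; exact hc.2)
      · have hnB : B' ∉ Submodule.span ℝ {C.P i} := fun hp =>
          hc (span_singleton_swap hB'0 hp)
        have h2 : projLine (C.P i) B' = C.L i :=
          projLine_eq_of (C.hL i) (C.hPL i) hB'1 (C.hP i) hnB
        have h3 : projLine (C.P i) B' = edgeLn C (i-1) :=
          projLine_eq_of (he2 (i-1)) hPi_em1 hBe (C.hP i) hnB
        exact (hfr i).1 (by rw [← h2, h3]; exact hPmem1 (i-1))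
  have c7 : C.P (i+2) ∉ Submodule.span ℝ ({p', B'} : Set V3) := by
    intro h
    obtain ⟨a, b, hab⟩ := Submodule.mem_span_pair.1 h
    by_cases hb0 : b = 0
    · subst hb0
      exact c1 (Submodule.mem_span_singleton.2 ⟨a, by rw [← hab, zero_smul, add_zero]⟩)
    · have h1 : b • B' = C.P (i+2) - a • p' := by rw [← hab]; abel
      have hBe : B' ∈ edgeLn C (i+1) := by
        have : B' = b⁻¹ • (C.P (i+2) - a • p') := by rw [← h1, inv_smul_smul₀ hb0]
        rw [this]
        refine Submodule.smul_mem _ _ (Submodule.sub_mem _ ?_ (Submodule.smul_mem _ _ hp'2))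
        rw [← hs2]; exact hPmem2 (i+1)
      by_cases hc : C.P (i+1) ∈ Submodule.span ℝ {B'}
      · rw [hB', Submodule.mem_inf] at hc
        exact (hfr i).2 hc.1
      · have hnB : B' ∉ Submodule.span ℝ {C.P (i+1)} := fun hp =>
          hc (span_singleton_swap hB'0 hp)
        have h2 : projLine (C.P (i+1)) B' = C.L (i+1) :=
          projLine_eq_of (C.hL (i+1)) (C.hPL (i+1)) hB'2 (C.hP (i+1)) hnB
        have h3 : projLine (C.P (i+1)) B' = edgeLn C (i+1) :=
          projLine_eq_of (he2 (i+1)) (hPmem1 (i+1)) hBe (C.hP (i+1)) hnB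
        exact (hfr (i+1)).2 (by rw [← h2, h3]; exact hPmem2 (i+1))
  -- ## Fin k arithmetic
  have hvk : ∀ j : Fin k, (j:ℕ) < k + 1 := fun j => lt_trans j.isLt (lt_add_one k)
  have hone_ne : (1 : Fin k) ≠ 0 := by
    intro h
    have := congrArg Fin.val h
    rw [Fin.val_one', Fin.val_zero, Nat.mod_eq_of_lt (by omega)] at this
    omega
  have hj0iff : ∀ j : Fin k, j = 0 ↔ (j:ℕ) = 0 := by
    intro j; rw [Fin.ext_iff, Fin.val_zero]
  have hval_one : ((1 : Fin k) : ℕ) = 1 := by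
    rw [Fin.val_one', Nat.mod_eq_of_lt (by omega)]
  have haddval : ∀ j : Fin k, (j:ℕ) + 1 < k → ((j+1 : Fin k) : ℕ) = (j:ℕ)+1 := by
    intro j hj
    rw [Fin.val_add, hval_one, Nat.mod_eq_of_lt hj]
  have hlastval : ∀ j : Fin k, (j:ℕ) = k - 1 → j + 1 = 0 := by
    intro j hj
    apply Fin.ext
    rw [Fin.val_add, hval_one, hj, Fin.val_zero, show k - 1 + 1 = k from by omega,
      Nat.mod_self]
  have hsubval : ∀ j : Fin k, j ≠ 0 → ((j - 1 : Fin k) : ℕ) = (j:ℕ) - 1 := by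
    intro j hj
    have hjv : 1 ≤ (j:ℕ) := by
      rcases Nat.eq_zero_or_pos (j:ℕ) with h | h
      · exact absurd ((hj0iff j).2 h) hj
      · omega
    rw [Fin.sub_def]
    simp only [hval_one]
    show (k - 1 + (j:ℕ)) % k = (j:ℕ) - 1
    rw [show k - 1 + (j:ℕ) = ((j:ℕ) - 1) + k from by omega, Nat.add_mod_right,
      Nat.mod_eq_of_lt (by omega)]
  have hsucc : ∀ m : ℕ, (i + 1 + ((m:ℕ) : Fin (k+1))) + 1 = i + 1 + (((m+1):ℕ) : Fin (k+1)) := by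
    intro m
    rw [add_assoc (i+1), ← Nat.cast_add_one]
  have hψk : i + 1 + ((k:ℕ) : Fin (k+1)) = i := by
    rw [add_assoc, add_comm (1 : Fin (k+1)), ← Nat.cast_add_one, Fin.natCast_self, add_zero]
  have hlast : i + 1 + (((k-1):ℕ) : Fin (k+1)) = i - 1 := by
    rw [eq_sub_iff_add_eq, hsucc, show k - 1 + 1 = k from by omega, hψk]
  have hψ0 : i + 1 + (((0:ℕ)):Fin (k+1)) = i + 1 := by norm_num
  have hψ1 : i + 1 + (((1:ℕ)):Fin (k+1)) = i + 2 := by rw [Nat.cast_one, hs2]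
  have hinj : ∀ a b : Fin k,
      i + 1 + ((a:ℕ) : Fin (k+1)) = i + 1 + ((b:ℕ) : Fin (k+1)) → a = b := by
    intro a b h
    have h2 := add_left_cancel h
    have h3 := congrArg Fin.val h2
    rw [Fin.val_natCast, Fin.val_natCast, Nat.mod_eq_of_lt (hvk a),
      Nat.mod_eq_of_lt (hvk b)] at h3
    exact Fin.ext h3
  -- ## the projected cycle
  set P' : Fin k → V3 :=
    fun j => if j = 0 then p' else C.P (i + 1 + ((j : ℕ) : Fin (k + 1))) with hP'def
  set L' : Fin k → Submodule ℝ V3 :=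
    fun j => if j = 0 then projLine p' B' else C.L (i + 1 + ((j : ℕ) : Fin (k + 1)))
    with hL'def
  have hP'0 : P' 0 = p' := if_pos rfl
  have hP'ne : ∀ j : Fin k, j ≠ 0 → P' j = C.P (i + 1 + ((j : ℕ) : Fin (k + 1))) :=
    fun j h => if_neg h
  have hL'0 : L' 0 = projLine p' B' := if_pos rfl
  have hL'ne : ∀ j : Fin k, j ≠ 0 → L' j = C.L (i + 1 + ((j : ℕ) : Fin (k + 1))) :=
    fun j h => if_neg h
  have hL'02 : Module.finrank ℝ (projLine p' B') = 2 := by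
    rw [projLine]; exact finrank_span_pair hp'0 cB
  have hj1ne : ∀ j : Fin k, (j:ℕ) + 1 < k → j + 1 ≠ 0 := by
    intro j hjlt h
    have := haddval j hjlt
    rw [h, Fin.val_zero] at this; omega
  have hzs : ((0 - 1 : Fin k) : ℕ) = k - 1 := by
    rw [Fin.sub_def]
    simp only [hval_one, Fin.val_zero]
    show (k - 1 + 0) % k = k - 1
    rw [Nat.add_zero, Nat.mod_eq_of_lt (by omega)]
  have hne01 : (0 - 1 : Fin k) ≠ 0 := by
    intro h; rw [h, Fin.val_zero] at hzs; omega
  have hP'all : ∀ j : Fin k, P' j ≠ 0 := by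
    intro j
    by_cases h : j = 0
    · rw [h, hP'0]; exact hp'0
    · rw [hP'ne j h]; exact C.hP _
  have hL'all : ∀ j : Fin k, Module.finrank ℝ (L' j) = 2 := by
    intro j
    by_cases h : j = 0
    · rw [h, hL'0]; exact hL'02
    · rw [hL'ne j h]; exact C.hL _
  have hPL'all : ∀ j : Fin k, P' j ∈ L' j := by
    intro j
    by_cases h : j = 0
    · rw [h, hP'0, hL'0]; exact Submodule.subset_span (Set.mem_insert _ _)
    · rw [hP'ne j h, hL'ne j h]; exact C.hPL _
  set C' : FramedCycle k := ⟨P', L', hP'all, hL'all, hPL'all⟩ with hC'def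
  have hE : ∀ j : Fin k, edgeLn C' j = edgeLn C (i + 1 + ((j : ℕ) : Fin (k + 1))) := by
    intro j
    show projLine (P' j) (P' (j+1)) = edgeLn C (i + 1 + ((j : ℕ) : Fin (k + 1)))
    by_cases h0 : j = 0
    · subst h0
      rw [zero_add, hP'0, hP'ne 1 hone_ne, hval_one, hψ1, Fin.val_zero, Nat.cast_zero,
        add_zero]
      refine projLine_eq_of (he2 (i+1)) hp'2 ?_ hp'0 c1
      have := hPmem2 (i+1); rwa [hs2] at this
    · by_cases hl : (j:ℕ) = k - 1
      · rw [hlastval j hl, hP'0, hP'ne j h0, hl, hlast]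
        exact projLine_eq_of (he2 (i-1)) (hPmem1 (i-1)) hp'1 (C.hP (i-1))
          (fun hp => c2 (span_singleton_swap hp'0 hp))
      · have hjlt : (j:ℕ) + 1 < k := by have := j.isLt; omega
        rw [hP'ne j h0, hP'ne (j+1) (hj1ne j hjlt), haddval j hjlt, ← hsucc]
        rfl
  refine ⟨C', fun j => rfl, fun j => rfl, ?_, ?_, ?_, ?_⟩
  · intro j
    rw [hE j]; exact he2 _
  · intro a b hab
    rw [hE a, hE b]
    exact hedist _ _ fun h => hab (hinj a b h)
  · intro a b a' b' hab ha'b' hset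
    rw [hE a, hE b, hE a', hE b']
    refine hint _ _ _ _ (fun h => hab (hinj a b h)) (fun h => ha'b' (hinj a' b' h)) ?_
    intro h
    apply hset
    have h1 : (i+1+((a:ℕ):Fin (k+1))) ∈
        ({i+1+((a':ℕ):Fin (k+1)), i+1+((b':ℕ):Fin (k+1))} : Finset (Fin (k+1))) := by
      rw [← h]; simp
    have h2 : (i+1+((b:ℕ):Fin (k+1))) ∈
        ({i+1+((a':ℕ):Fin (k+1)), i+1+((b':ℕ):Fin (k+1))} : Finset (Fin (k+1))) := by
      rw [← h]; simp
    rw [Finset.mem_insert, Finset.mem_singleton] at h1 h2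
    rcases h1 with h1 | h1 <;> rcases h2 with h2 | h2
    · exact absurd ((hinj a a' h1).trans (hinj b a' h2).symm) hab
    · rw [hinj a a' h1, hinj b b' h2]
    · rw [hinj a b' h1, hinj b a' h2]; exact Finset.pair_comm _ _
    · exact absurd ((hinj a b' h1).trans (hinj b b' h2).symm) hab
  · intro j
    by_cases h0 : j = 0
    · subst h0
      constructor
      · show P' (0 - 1) ∉ L' 0
        rw [hL'0, projLine, hP'ne _ hne01, hzs, hlast]
        exact c6
      · show P' (0 + 1) ∉ L' 0
        rw [hL'0, projLine, zero_add, hP'ne 1 hone_ne, hval_one, hψ1]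
        exact c7
    · constructor
      · show P' (j - 1) ∉ L' j
        rw [hL'ne j h0]
        by_cases h1 : (j:ℕ) = 1
        · have hjm : j - 1 = 0 := by
            apply Fin.ext; rw [hsubval j h0, h1, Fin.val_zero]
          rw [hjm, hP'0, h1, hψ1]
          exact c8
        · have hjm_ne : j - 1 ≠ 0 := by
            intro h
            have hv := hsubval j h0
            rw [h, Fin.val_zero] at hv
            have hj0' : (j:ℕ) ≠ 0 := fun hh => h0 ((hj0iff j).2 hh)
            omega
          rw [hP'ne _ hjm_ne, hsubval j h0]
          have hrel : (i + 1 + ((((j:ℕ)-1) : ℕ) : Fin (k+1))) + 1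
              = i + 1 + (((j:ℕ)) : Fin (k+1)) := by
            rw [hsucc]
            have hj0' : (j:ℕ) ≠ 0 := fun hh => h0 ((hj0iff j).2 hh)
            congr 2
            omega
          have heq : i + 1 + ((((j:ℕ)-1) : ℕ) : Fin (k+1))
              = (i + 1 + (((j:ℕ)) : Fin (k+1))) - 1 := by
            rw [eq_sub_iff_add_eq, hrel]
          rw [heq]
          exact (hfr _).1
      · show P' (j + 1) ∉ L' j
        rw [hL'ne j h0]
        by_cases hl : (j:ℕ) = k - 1
        · rw [hlastval j hl, hP'0, hl, hlast]
          exact c9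
        · have hjlt : (j:ℕ) + 1 < k := by have := j.isLt; omega
          rw [hP'ne _ (hj1ne j hjlt), haddval j hjlt, ← hsucc]
          exact (hfr _).2
end
end

section
/- Let C(P,L) be a framed cycle in general position, let ℓ be a line that does not contain any intersection point of any pair of edge lines of C(P,L), and let 1 ≤ i ≤ k. Then the monodromy operator M_ℓ(ℓᵢ, C(P,L)) is trivial if and only if there exists a nonzero equilibrium force-load on C(P,L). -/
open scoped Classical

noncomputable section

/-! ### Auxiliary machinery -/

open scoped Matrix
open Module
open Fin.NatCast

section Helpers

lemma dot_sub_smul' (w y p : V3) (c : ℝ) : w ⬝ᵥ (y - c • p) = w ⬝ᵥ y - c * (w ⬝ᵥ p) := by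
  rw [dotProduct_sub, dotProduct_smul, smul_eq_mul]

lemma dot_add_smul' (w : V3) (a b : ℝ) (p q : V3) :
    w ⬝ᵥ (a • p + b • q) = a * (w ⬝ᵥ p) + b * (w ⬝ᵥ q) := by
  rw [dotProduct_add, dotProduct_smul, dotProduct_smul,
    smul_eq_mul, smul_eq_mul]

lemma eq_zero_of_dots {u v w y : V3} (hdet : u ⬝ᵥ v ⨯₃ w ≠ 0)
    (hu : u ⬝ᵥ y = 0) (hv : v ⬝ᵥ y = 0) (hw : w ⬝ᵥ y = 0) : y = 0 := by
  have hM : IsUnit (Matrix.det ![u, v, w]) := by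
    rw [← triple_product_eq_det]; exact isUnit_iff_ne_zero.2 hdet
  have h0 : (Matrix.of ![u, v, w]) *ᵥ y = 0 := by
    funext i
    fin_cases i
    · exact hu
    · exact hv
    · exact hw
  have hM' : IsUnit (Matrix.of ![u, v, w]).det := hM
  have h1 : y = (Matrix.of ![u, v, w])⁻¹ *ᵥ ((Matrix.of ![u, v, w]) *ᵥ y) := by
    rw [Matrix.mulVec_mulVec, Matrix.nonsing_inv_mul _ hM', Matrix.one_mulVec]
  rw [h1, h0, Matrix.mulVec_zero]

lemma eq_smul_of_dots {u v w p y : V3} (hdet : u ⬝ᵥ v ⨯₃ w ≠ 0)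
    (hup : u ⬝ᵥ p = 0) (hvp : v ⬝ᵥ p = 0) (hwp : w ⬝ᵥ p ≠ 0)
    (huy : u ⬝ᵥ y = 0) (hvy : v ⬝ᵥ y = 0) :
    y = ((w ⬝ᵥ y) / (w ⬝ᵥ p)) • p := by
  have h : y - ((w ⬝ᵥ y) / (w ⬝ᵥ p)) • p = 0 := by
    apply eq_zero_of_dots hdet <;> rw [dot_sub_smul']
    · rw [hup, huy]; ring
    · rw [hvp, hvy]; ring
    · rw [div_mul_cancel₀ _ hwp, sub_self]
  linear_combination (norm := module) h

lemma mem_span_single_of_dots {u v w p y : V3} (hdet : u ⬝ᵥ v ⨯₃ w ≠ 0)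
    (hup : u ⬝ᵥ p = 0) (hvp : v ⬝ᵥ p = 0) (hwp : w ⬝ᵥ p ≠ 0)
    (huy : u ⬝ᵥ y = 0) (hvy : v ⬝ᵥ y = 0) :
    y ∈ Submodule.span ℝ ({p} : Set V3) := by
  rw [Submodule.mem_span_singleton]
  exact ⟨(w ⬝ᵥ y) / (w ⬝ᵥ p), (eq_smul_of_dots hdet hup hvp hwp huy hvy).symm⟩

lemma mem_span_pair_of_dots {u v w p r y : V3} (hdet : u ⬝ᵥ v ⨯₃ w ≠ 0)
    (hup : u ⬝ᵥ p = 0) (hur : u ⬝ᵥ r = 0)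
    (hvp : v ⬝ᵥ p ≠ 0) (hvr : v ⬝ᵥ r = 0)
    (hwp : w ⬝ᵥ p = 0) (hwr : w ⬝ᵥ r ≠ 0)
    (huy : u ⬝ᵥ y = 0) :
    y ∈ Submodule.span ℝ ({p, r} : Set V3) := by
  have h : y - ((v ⬝ᵥ y) / (v ⬝ᵥ p)) • p - ((w ⬝ᵥ y) / (w ⬝ᵥ r)) • r = 0 := by
    apply eq_zero_of_dots hdet <;> rw [dot_sub_smul', dot_sub_smul']
    · rw [hup, hur, huy]; ring
    · rw [hvr, div_mul_cancel₀ _ hvp]; ring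
    · rw [hwp, div_mul_cancel₀ _ hwr]; ring
  rw [Submodule.mem_span_pair]
  exact ⟨(v ⬝ᵥ y) / (v ⬝ᵥ p), (w ⬝ᵥ y) / (w ⬝ᵥ r), by linear_combination (norm := module) -h⟩

lemma exists_normal {W : Submodule ℝ V3} (hW : finrank ℝ W = 2) :
    ∃ g : V3, ∀ x : V3, x ∈ W ↔ g ⬝ᵥ x = 0 := by
  have hQ : finrank ℝ (V3 ⧸ W) = 1 := by
    have := Submodule.finrank_quotient_add_finrank W
    have h3 : finrank ℝ V3 = 3 := by simp
    omega
  obtain ⟨b⟩ := (finrank_eq_one_iff (Fin 1)).1 hQ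
  set f : V3 →ₗ[ℝ] ℝ := (b.coord 0) ∘ₗ W.mkQ with hf
  have hker : ∀ x : V3, x ∈ W ↔ f x = 0 := by
    intro x
    constructor
    · intro hx
      simp [hf, (Submodule.Quotient.mk_eq_zero W).2 hx]
    · intro hx
      have : W.mkQ x = 0 := by
        have := b.sum_repr (W.mkQ x)
        simp only [Fin.sum_univ_one] at this
        rw [← this]
        have : b.repr (W.mkQ x) 0 = 0 := hx
        rw [this, zero_smul]
      exact (Submodule.Quotient.mk_eq_zero W).1 this
  refine ⟨fun j => f (Pi.single j 1), fun x => ?_⟩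
  have : f x = (fun j => f (Pi.single j 1)) ⬝ᵥ x := by
    conv_lhs => rw [pi_eq_sum_univ x]
    rw [map_sum]
    simp only [dotProduct, smul_eq_mul]
    refine Finset.sum_congr rfl fun j _ => ?_
    rw [map_smul, smul_eq_mul]
    have h1 : (fun j1 => if j = j1 then (1:ℝ) else 0) = Pi.single j 1 := by
      funext i
      simp [Pi.single_apply, eq_comm]
    rw [h1, mul_comm]
  rw [hker x, this]

lemma span_single_eq_of_rank_one {X : Submodule ℝ V3} (hX : finrank ℝ X = 1) :
    ∃ x : V3, x ≠ 0 ∧ X = Submodule.span ℝ ({x} : Set V3) := by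
  obtain ⟨v, hv0, hv⟩ := finrank_eq_one_iff'.1 hX
  refine ⟨(v : V3), by simpa using hv0, le_antisymm ?_ ?_⟩
  · intro y hy
    obtain ⟨c, hc⟩ := hv ⟨y, hy⟩
    rw [Submodule.mem_span_singleton]
    exact ⟨c, by simpa using congrArg Subtype.val hc⟩
  · rw [Submodule.span_le, Set.singleton_subset_iff]
    exact v.2

lemma span_singleton_smul_eq' {x : V3} {c : ℝ} (hc : c ≠ 0) :
    Submodule.span ℝ ({c • x} : Set V3) = Submodule.span ℝ ({x} : Set V3) := by
  apply le_antisymm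
  · rw [Submodule.span_le, Set.singleton_subset_iff]
    exact Submodule.smul_mem _ c (Submodule.mem_span_singleton_self x)
  · rw [Submodule.span_le, Set.singleton_subset_iff, SetLike.mem_coe,
      Submodule.mem_span_singleton]
    exact ⟨c⁻¹, by rw [smul_smul, inv_mul_cancel₀ hc, one_smul]⟩

lemma dualE_dot (p x : V3) : dualE p x = p ⬝ᵥ x := rfl

lemma dualE_comb (a1 a2 : ℝ) (p q x : V3) :
    dualE (a1 • p + a2 • q) x = a1 * dualE p x + a2 * dualE q x := by
  simp [dualE, Finset.sum_add_distrib, Finset.mul_sum, add_mul, mul_assoc]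

lemma wedgeE_comb (a1 a2 b1 b2 : ℝ) (p q : V3) :
    wedgeE (a1 • p + a2 • q) (b1 • p + b2 • q)
      = fun x y => (a1 * b2 - a2 * b1) * wedgeE p q x y := by
  funext x y
  simp only [wedgeE, dualE_comb]
  ring

lemma alongSub_span_pair {F : Form} {p q : V3}
    (h : AlongSub F (Submodule.span ℝ ({p, q} : Set V3))) :
    ∃ c : ℝ, F = fun x y => c * wedgeE p q x y := by
  obtain ⟨a, b, ha, hb, rfl⟩ := h
  obtain ⟨a1, a2, ha'⟩ := Submodule.mem_span_pair.1 ha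
  obtain ⟨b1, b2, hb'⟩ := Submodule.mem_span_pair.1 hb
  exact ⟨a1 * b2 - a2 * b1, by rw [← ha', ← hb', wedgeE_comb]⟩

lemma wedgeE_smul_left_s12 (c : ℝ) (p q : V3) :
    wedgeE (c • p) q = fun x y => c * wedgeE p q x y := by
  funext x y
  have := wedgeE_comb c 0 0 1 p q
  simpa using congrFun (congrFun this x) y

lemma wedgeE_eval (a b x y : V3) :
    wedgeE a b x y = (a ⬝ᵥ x) * (b ⬝ᵥ y) - (a ⬝ᵥ y) * (b ⬝ᵥ x) := rfl

lemma alongSub_eval_normal {F : Form} {W : Submodule ℝ V3} {g : V3}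
    (hW : ∀ x : V3, x ∈ W → g ⬝ᵥ x = 0) (h : AlongSub F W) (x : V3) :
    F x g = 0 := by
  obtain ⟨a, b, ha, hb, rfl⟩ := h
  rw [wedgeE_eval]
  rw [show a ⬝ᵥ g = g ⬝ᵥ a from dotProduct_comm a g,
    show b ⬝ᵥ g = g ⬝ᵥ b from dotProduct_comm b g, hW a ha, hW b hb]
  ring

end Helpers

/-! ### The geometric setup -/

def eE {k : ℕ} [NeZero k] (C : FramedCycle k) (j : Fin k) : V3 := C.P j ⨯₃ C.P (j + 1)

def vstep (g q x : V3) : V3 := (g ⬝ᵥ x) • q - (g ⬝ᵥ q) • x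

structure Setup (k : ℕ) [NeZero k] (C : FramedCycle k) (ℓ : Submodule ℝ V3) where
  hk2 : 2 ≤ k
  g : Fin k → V3
  φ : V3
  hg : ∀ j (x : V3), x ∈ C.L j ↔ g j ⬝ᵥ x = 0
  hφ : ∀ x : V3, x ∈ ℓ ↔ φ ⬝ᵥ x = 0
  hA : ∀ j, φ ⬝ᵥ C.P j ≠ 0
  hB : ∀ j, g j ⬝ᵥ C.P (j + 1) ≠ 0
  hB' : ∀ j, g j ⬝ᵥ C.P (j - 1) ≠ 0
  hEk : ∀ j (x : V3), x ∈ edgeLn C j ↔ eE C j ⬝ᵥ x = 0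

namespace Setup

variable {k : ℕ} [NeZero k] {C : FramedCycle k} {ℓ : Submodule ℝ V3} (S : Setup k C ℓ)

def q (j : Fin k) : V3 := eE C j ⨯₃ S.φ
def r (j : Fin k) : V3 := S.g j ⨯₃ S.φ

def mu (j : Fin k) : ℝ :=
  (-(S.g (j + 1) ⬝ᵥ S.q j) * (S.φ ⬝ᵥ C.P j)) / (S.φ ⬝ᵥ C.P (j + 1))
def nu (j : Fin k) : ℝ :=
  (-(S.g (j + 1) ⬝ᵥ S.q j) * (eE C j ⬝ᵥ S.r j)) / (eE C j ⬝ᵥ S.r (j + 1))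
def lam (j : Fin k) : ℝ := -(S.g j ⬝ᵥ C.P (j - 1)) / (S.g j ⬝ᵥ C.P (j + 1))

def vch (S : Setup k C ℓ) (i : Fin k) : ℕ → V3 → V3
  | 0, x => x
  | n + 1, x => vstep (S.g (i + (n : Fin k) + 1)) (S.q (i + (n : Fin k))) (vch S i n x)

lemma hgP (j : Fin k) : S.g j ⬝ᵥ C.P j = 0 := (S.hg j _).1 (C.hPL j)

lemma hB'' (j : Fin k) : S.g (j + 1) ⬝ᵥ C.P j ≠ 0 := by
  have := S.hB' (j + 1)
  rwa [add_sub_cancel_right] at this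

lemma dot_e_P (j : Fin k) : eE C j ⬝ᵥ C.P j = 0 := by
  rw [dotProduct_comm]; exact dot_self_cross _ _

lemma dot_e_P' (j : Fin k) : eE C j ⬝ᵥ C.P (j + 1) = 0 := by
  rw [dotProduct_comm]; exact dot_cross_self _ _

lemma dot_e_q (j : Fin k) : eE C j ⬝ᵥ S.q j = 0 := dot_self_cross _ _

lemma dot_phi_q (j : Fin k) : S.φ ⬝ᵥ S.q j = 0 := dot_cross_self _ _

lemma dot_g_r (j : Fin k) : S.g j ⬝ᵥ S.r j = 0 := dot_self_cross _ _

lemma dot_phi_r (j : Fin k) : S.φ ⬝ᵥ S.r j = 0 := dot_cross_self _ _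

lemma dot_g_q (j : Fin k) :
    S.g (j + 1) ⬝ᵥ S.q j = -((S.g (j + 1) ⬝ᵥ C.P j) * (S.φ ⬝ᵥ C.P (j + 1))) := by
  have h1 : S.g (j + 1) ⬝ᵥ S.q j = eE C j ⬝ᵥ (S.φ ⨯₃ S.g (j + 1)) :=
    triple_product_permutation _ _ _
  rw [h1, eE, cross_dot_cross,
    dotProduct_comm (C.P j) S.φ, dotProduct_comm (C.P (j+1)) (S.g (j+1)),
    dotProduct_comm (C.P j) (S.g (j+1)), dotProduct_comm (C.P (j+1)) S.φ,
    S.hgP (j + 1)]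
  ring

lemma dot_g_q_ne (j : Fin k) : S.g (j + 1) ⬝ᵥ S.q j ≠ 0 := by
  rw [S.dot_g_q j]
  exact neg_ne_zero.2 (mul_ne_zero (S.hB'' j) (S.hA (j + 1)))

lemma dot_e_r (j : Fin k) :
    eE C j ⬝ᵥ S.r j = -((S.φ ⬝ᵥ C.P j) * (S.g j ⬝ᵥ C.P (j + 1))) := by
  rw [eE, r, cross_dot_cross,
    dotProduct_comm (C.P j) (S.g j), dotProduct_comm (C.P (j+1)) S.φ,
    dotProduct_comm (C.P j) S.φ, dotProduct_comm (C.P (j+1)) (S.g j),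
    S.hgP j]
  ring

lemma dot_e_r_ne (j : Fin k) : eE C j ⬝ᵥ S.r j ≠ 0 := by
  rw [S.dot_e_r j]
  exact neg_ne_zero.2 (mul_ne_zero (S.hA j) (S.hB j))

lemma dot_e_r' (j : Fin k) :
    eE C j ⬝ᵥ S.r (j + 1) = (S.g (j + 1) ⬝ᵥ C.P j) * (S.φ ⬝ᵥ C.P (j + 1)) := by
  rw [eE, r, cross_dot_cross,
    dotProduct_comm (C.P j) (S.g (j+1)), dotProduct_comm (C.P (j+1)) S.φ,
    dotProduct_comm (C.P j) S.φ, dotProduct_comm (C.P (j+1)) (S.g (j+1)),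
    S.hgP (j + 1)]
  ring

lemma dot_e_r'_ne (j : Fin k) : eE C j ⬝ᵥ S.r (j + 1) ≠ 0 := by
  rw [S.dot_e_r' j]
  exact mul_ne_zero (S.hB'' j) (S.hA (j + 1))

lemma hdet (j : Fin k) : eE C j ⬝ᵥ (S.g (j + 1) ⨯₃ S.φ) ≠ 0 := S.dot_e_r'_ne j

lemma hdet' (j : Fin k) : eE C j ⬝ᵥ (S.g j ⨯₃ S.φ) ≠ 0 := S.dot_e_r_ne j

lemma mu_ne (j : Fin k) : S.mu j ≠ 0 :=
  div_ne_zero (mul_ne_zero (neg_ne_zero.2 (S.dot_g_q_ne j)) (S.hA j)) (S.hA (j + 1))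

lemma nu_ne (j : Fin k) : S.nu j ≠ 0 :=
  div_ne_zero (mul_ne_zero (neg_ne_zero.2 (S.dot_g_q_ne j)) (S.dot_e_r_ne j))
    (S.dot_e_r'_ne j)

lemma lam_ne (j : Fin k) : S.lam j ≠ 0 :=
  div_ne_zero (neg_ne_zero.2 (S.hB' j)) (S.hB j)

end Setup

namespace Setup

variable {k : ℕ} [NeZero k] {C : FramedCycle k} {ℓ : Submodule ℝ V3} (S : Setup k C ℓ)

/-- the intersection point of an edge line with the auxiliary line -/
lemma edge_inf_line (j : Fin k) :
    edgeLn C j ⊓ ℓ = Submodule.span ℝ ({S.q j} : Set V3) := by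
  apply le_antisymm
  · intro x hx
    exact mem_span_single_of_dots
      (show eE C j ⬝ᵥ (S.φ ⨯₃ S.g (j+1)) ≠ 0 by
        have : S.φ ⨯₃ S.g (j+1) = -(S.g (j+1) ⨯₃ S.φ) := (cross_anticomm _ _).symm
        rw [this, dotProduct_neg, neg_ne_zero]
        exact S.hdet j)
      (S.dot_e_q j) (S.dot_phi_q j) (S.dot_g_q_ne j)
      ((S.hEk j x).1 hx.1) ((S.hφ x).1 hx.2)
  · rw [Submodule.span_le, Set.singleton_subset_iff]
    exact ⟨(S.hEk j _).2 (S.dot_e_q j), (S.hφ _).2 (S.dot_phi_q j)⟩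

lemma shift_span (j : Fin k) (x : V3) :
    shiftPt (edgeLn C j) ℓ (C.L (j + 1)) (Submodule.span ℝ ({x} : Set V3))
      = Submodule.span ℝ ({vstep (S.g (j + 1)) (S.q j) x} : Set V3) := by
  have hq := S.dot_g_q_ne j
  rw [shiftPt, S.edge_inf_line j, ← Submodule.span_union,
    show ({S.q j} : Set V3) ∪ {x} = {S.q j, x} by rw [Set.singleton_union]]
  apply le_antisymm
  · rintro y ⟨hy1, hy2⟩
    obtain ⟨α, β, hab⟩ := Submodule.mem_span_pair.1 hy2
    have hgy : S.g (j + 1) ⬝ᵥ y = 0 := (S.hg (j + 1) y).1 hy1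
    rw [← hab, dot_add_smul'] at hgy
    rw [Submodule.mem_span_singleton]
    refine ⟨-β / (S.g (j + 1) ⬝ᵥ S.q j), ?_⟩
    rw [← hab, vstep, smul_sub, smul_smul, smul_smul]
    have h1 : -β / (S.g (j + 1) ⬝ᵥ S.q j) * (S.g (j + 1) ⬝ᵥ x) = α := by
      rw [div_mul_eq_mul_div, div_eq_iff hq]
      linarith [hgy]
    have h2 : -β / (S.g (j + 1) ⬝ᵥ S.q j) * (S.g (j + 1) ⬝ᵥ S.q j) = -β :=
      div_mul_cancel₀ _ hq
    rw [h1, h2]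
    module
  · rw [Submodule.span_le, Set.singleton_subset_iff]
    constructor
    · apply (S.hg (j + 1) _).2
      rw [vstep, dotProduct_sub, dotProduct_smul, dotProduct_smul,
        smul_eq_mul, smul_eq_mul]
      ring
    · exact Submodule.mem_span_pair.2 ⟨S.g (j+1) ⬝ᵥ x, -(S.g (j+1) ⬝ᵥ S.q j), by rw [vstep]; module⟩

end Setup

namespace Setup

variable {k : ℕ} [NeZero k] {C : FramedCycle k} {ℓ : Submodule ℝ V3} (S : Setup k C ℓ)

lemma dot_vstep (h g q x : V3) :
    h ⬝ᵥ vstep g q x = (g ⬝ᵥ x) * (h ⬝ᵥ q) - (g ⬝ᵥ q) * (h ⬝ᵥ x) := by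
  rw [vstep, dotProduct_sub, dotProduct_smul, dotProduct_smul,
    smul_eq_mul, smul_eq_mul]

lemma vstep_add (g q x y : V3) : vstep g q (x + y) = vstep g q x + vstep g q y := by
  simp only [vstep, dotProduct_add]
  module

lemma vstep_smul (g q : V3) (c : ℝ) (x : V3) : vstep g q (c • x) = c • vstep g q x := by
  simp only [vstep, dotProduct_smul, smul_eq_mul]
  module

lemma chain_span (i : Fin k) (n : ℕ) (x : V3) :
    shiftChain C ℓ i n (Submodule.span ℝ ({x} : Set V3))
      = Submodule.span ℝ ({S.vch i n x} : Set V3) := by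
  induction n with
  | zero => rfl
  | succ n ih =>
      show shiftPt (edgeLn C (i + (n : Fin k))) ℓ (C.L (i + (n : Fin k) + 1))
          (shiftChain C ℓ i n (Submodule.span ℝ ({x} : Set V3))) = _
      rw [ih, S.shift_span (i + (n : Fin k)) (S.vch i n x)]
      rfl

lemma step_P (j : Fin k) :
    vstep (S.g (j + 1)) (S.q j) (C.P j) = S.mu j • C.P (j + 1) := by
  have hy1 : eE C j ⬝ᵥ vstep (S.g (j + 1)) (S.q j) (C.P j) = 0 := by
    rw [dot_vstep, S.dot_e_q j, dot_e_P (C := C) j]; ring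
  have hy2 : S.g (j + 1) ⬝ᵥ vstep (S.g (j + 1)) (S.q j) (C.P j) = 0 := by
    rw [dot_vstep]; ring
  have h := eq_smul_of_dots (S.hdet j) (dot_e_P' (C := C) j) (S.hgP (j + 1)) (S.hA (j + 1)) hy1 hy2
  rw [h]
  congr 1
  rw [dot_vstep, S.dot_phi_q j, mu]
  ring_nf

lemma step_r (j : Fin k) :
    vstep (S.g (j + 1)) (S.q j) (S.r j) = S.nu j • S.r (j + 1) := by
  have hdet2 : S.g (j + 1) ⬝ᵥ (S.φ ⨯₃ eE C j) ≠ 0 := by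
    rw [triple_product_permutation, triple_product_permutation]
    exact S.hdet j
  have hy1 : S.g (j + 1) ⬝ᵥ vstep (S.g (j + 1)) (S.q j) (S.r j) = 0 := by
    rw [dot_vstep]; ring
  have hy2 : S.φ ⬝ᵥ vstep (S.g (j + 1)) (S.q j) (S.r j) = 0 := by
    rw [dot_vstep, S.dot_phi_q j, S.dot_phi_r j]; ring
  have h := eq_smul_of_dots hdet2 (S.dot_g_r (j + 1)) (S.dot_phi_r (j + 1))
    (S.dot_e_r'_ne j) hy1 hy2
  rw [h]
  congr 1
  rw [dot_vstep, S.dot_e_q j, nu]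
  ring_nf

lemma vch_smul (i : Fin k) (n : ℕ) (c : ℝ) (x : V3) :
    S.vch i n (c • x) = c • S.vch i n x := by
  induction n with
  | zero => rfl
  | succ n ih => show vstep _ _ (S.vch i n (c • x)) = _; rw [ih, vstep_smul]; rfl

lemma vch_add (i : Fin k) (n : ℕ) (x y : V3) :
    S.vch i n (x + y) = S.vch i n x + S.vch i n y := by
  induction n with
  | zero => rfl
  | succ n ih => show vstep _ _ (S.vch i n (x + y)) = _; rw [ih, vstep_add]; rfl

lemma chain_P (i : Fin k) (n : ℕ) :
    S.vch i n (C.P i)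
      = (∏ t ∈ Finset.range n, S.mu (i + (t : Fin k))) • C.P (i + (n : Fin k)) := by
  induction n with
  | zero => simp [vch]
  | succ n ih =>
      show vstep (S.g (i + (n : Fin k) + 1)) (S.q (i + (n : Fin k))) (S.vch i n (C.P i)) = _
      rw [ih, vstep_smul, S.step_P (i + (n : Fin k)), Finset.prod_range_succ, smul_smul,
        Nat.cast_add, Nat.cast_one, ← add_assoc]

lemma chain_r (i : Fin k) (n : ℕ) :
    S.vch i n (S.r i)
      = (∏ t ∈ Finset.range n, S.nu (i + (t : Fin k))) • S.r (i + (n : Fin k)) := by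
  induction n with
  | zero => simp [vch]
  | succ n ih =>
      show vstep (S.g (i + (n : Fin k) + 1)) (S.q (i + (n : Fin k))) (S.vch i n (S.r i)) = _
      rw [ih, vstep_smul, S.step_r (i + (n : Fin k)), Finset.prod_range_succ, smul_smul,
        Nat.cast_add, Nat.cast_one, ← add_assoc]

end Setup

namespace Setup

variable {k : ℕ} [NeZero k] {C : FramedCycle k} {ℓ : Submodule ℝ V3} (S : Setup k C ℓ)

lemma prod_shift (f : Fin k → ℝ) (i : Fin k) :
    ∏ t ∈ Finset.range k, f (i + (t : Fin k)) = ∏ j : Fin k, f j := by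
  rw [← Fin.prod_univ_eq_prod_range (fun t => f (i + (t : Fin k))) k]
  have h1 : ∀ j : Fin k, f (i + ((j : ℕ) : Fin k)) = f (i + j) := by
    intro j; rw [Fin.cast_val_eq_self]
  rw [Finset.prod_congr rfl fun j _ => h1 j]
  exact Equiv.prod_comp (Equiv.addLeft i) f

lemma chain_P_full (i : Fin k) :
    S.vch i k (C.P i) = (∏ j : Fin k, S.mu j) • C.P i := by
  rw [S.chain_P i k, prod_shift S.mu i, Fin.natCast_self, add_zero]

lemma chain_r_full (i : Fin k) :
    S.vch i k (S.r i) = (∏ j : Fin k, S.nu j) • S.r i := by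
  rw [S.chain_r i k, prod_shift S.nu i, Fin.natCast_self, add_zero]

lemma r_mem_L (j : Fin k) : S.r j ∈ C.L j := (S.hg j _).2 (S.dot_g_r j)

lemma Pr_ne (i : Fin k) : C.P i + S.r i ≠ 0 := by
  intro h
  have h2 : S.φ ⬝ᵥ (C.P i + S.r i) = S.φ ⬝ᵥ C.P i := by
    rw [dotProduct_add, S.dot_phi_r i, add_zero]
  rw [h, dotProduct_zero] at h2
  exact S.hA i h2.symm

lemma mono_iff (i : Fin k) :
    MonoTrivial C ℓ i ↔ (∏ j : Fin k, S.mu j) = ∏ j : Fin k, S.nu j := by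
  constructor
  · intro hM
    have hle : Submodule.span ℝ ({C.P i + S.r i} : Set V3) ≤ C.L i := by
      rw [Submodule.span_le, Set.singleton_subset_iff]
      exact Submodule.add_mem _ (C.hPL i) (S.r_mem_L i)
    have hrank : finrank ℝ (Submodule.span ℝ ({C.P i + S.r i} : Set V3)) = 1 :=
      finrank_span_singleton (S.Pr_ne i)
    have h := hM _ hle hrank
    rw [S.chain_span i k (C.P i + S.r i), S.vch_add, S.chain_P_full, S.chain_r_full] at h
    have hmem : (∏ j : Fin k, S.mu j) • C.P i + (∏ j : Fin k, S.nu j) • S.r i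
        ∈ Submodule.span ℝ ({C.P i + S.r i} : Set V3) := by
      rw [← h]
      exact Submodule.mem_span_singleton_self _
    obtain ⟨c, hc⟩ := Submodule.mem_span_singleton.1 hmem
    have hφc := congrArg (fun z => S.φ ⬝ᵥ z) hc
    simp only [dotProduct_smul, dotProduct_add, smul_eq_mul,
      S.dot_phi_r i, add_zero, mul_zero] at hφc
    have hc1 : c = ∏ j : Fin k, S.mu j := mul_right_cancel₀ (S.hA i) (by linarith [hφc])
    have hec := congrArg (fun z => eE C i ⬝ᵥ z) hc
    simp only [dotProduct_smul, dotProduct_add, smul_eq_mul,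
      dot_e_P (C := C) i, zero_add, mul_zero] at hec
    have hc2 : c = ∏ j : Fin k, S.nu j := mul_right_cancel₀ (S.dot_e_r_ne i)
      (by linarith [hec])
    rw [← hc1, ← hc2]
  · intro hP
    intro X hle hrank
    obtain ⟨x, hx0, rfl⟩ := span_single_eq_of_rank_one hrank
    have hxL : x ∈ C.L i := hle (Submodule.mem_span_singleton_self x)
    have hdet2 : S.g i ⬝ᵥ (S.φ ⨯₃ eE C i) ≠ 0 := by
      rw [triple_product_permutation, triple_product_permutation]
      exact S.hdet' i
    have hmem : x ∈ Submodule.span ℝ ({C.P i, S.r i} : Set V3) :=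
      mem_span_pair_of_dots hdet2 (S.hgP i) (S.dot_g_r i) (S.hA i) (S.dot_phi_r i)
        (dot_e_P (C := C) i) (S.dot_e_r_ne i) ((S.hg i x).1 hxL)
    obtain ⟨a, b, hab⟩ := Submodule.mem_span_pair.1 hmem
    have hch : S.vch i k x = (∏ j : Fin k, S.mu j) • x := by
      rw [← hab, S.vch_add, S.vch_smul, S.vch_smul, S.chain_P_full, S.chain_r_full, ← hP]
      module
    rw [S.chain_span i k x, hch]
    exact span_singleton_smul_eq' (Finset.prod_ne_zero_iff.2 fun j _ => S.mu_ne j)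

end Setup

/-! ### products and the scalar invariant -/

def recProd {k : ℕ} [NeZero k] (lam : Fin k → ℝ) : ℕ → ℝ
  | 0 => 1
  | n + 1 => lam (((n + 1 : ℕ)) : Fin k) * recProd lam n

lemma recProd_ne {k : ℕ} [NeZero k] {lam : Fin k → ℝ} (h : ∀ j, lam j ≠ 0) (n : ℕ) :
    recProd lam n ≠ 0 := by
  induction n with
  | zero => exact one_ne_zero
  | succ n ih => exact mul_ne_zero (h _) ih

namespace Setup

variable {k : ℕ} [NeZero k] {C : FramedCycle k} {ℓ : Submodule ℝ V3} (S : Setup k C ℓ)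

lemma mu_eq_nu (j : Fin k) :
    S.mu j = (-(S.g (j + 1) ⬝ᵥ C.P j) / (S.g j ⬝ᵥ C.P (j + 1))) * S.nu j := by
  have h1 := S.hA j
  have h2 := S.hA (j + 1)
  have h3 := S.hB j
  have h4 := S.hB'' j
  rw [mu, nu, S.dot_e_r, S.dot_e_r']
  set G := S.g (j + 1) ⬝ᵥ S.q j with hG
  set A1 := S.φ ⬝ᵥ C.P j with hA1
  set A2 := S.φ ⬝ᵥ C.P (j + 1) with hA2
  set B1 := S.g j ⬝ᵥ C.P (j + 1) with hB1
  set B2 := S.g (j + 1) ⬝ᵥ C.P j with hB2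
  field_simp

lemma prod_mu_div_nu :
    (∏ j : Fin k, S.mu j) = (∏ j : Fin k, S.lam j) * ∏ j : Fin k, S.nu j := by
  have h1 : (∏ j : Fin k, S.mu j)
      = ∏ j : Fin k, ((-(S.g (j + 1) ⬝ᵥ C.P j) / (S.g j ⬝ᵥ C.P (j + 1))) * S.nu j) :=
    Finset.prod_congr rfl fun j _ => S.mu_eq_nu j
  rw [h1, Finset.prod_mul_distrib]
  congr 1
  simp only [lam]
  rw [Finset.prod_div_distrib, Finset.prod_div_distrib]
  congr 1
  have := Equiv.prod_comp (Equiv.addRight (1 : Fin k))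
    (fun j => -(S.g j ⬝ᵥ C.P (j - 1)))
  rw [← this]
  refine Finset.prod_congr rfl fun j _ => ?_
  simp only [Equiv.coe_addRight, add_sub_cancel_right]

lemma mono_iff_lam (i : Fin k) :
    MonoTrivial C ℓ i ↔ (∏ j : Fin k, S.lam j) = 1 := by
  rw [S.mono_iff i, S.prod_mu_div_nu]
  have hnu : (∏ j : Fin k, S.nu j) ≠ 0 := Finset.prod_ne_zero_iff.2 fun j _ => S.nu_ne j
  constructor
  · intro h
    field_simp at h
    exact h
  · intro h
    rw [h, one_mul]

end Setup

namespace Setup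

variable {k : ℕ} [NeZero k] {C : FramedCycle k} {ℓ : Submodule ℝ V3} (S : Setup k C ℓ)

lemma recProd_eq (n : ℕ) :
    recProd S.lam n = ∏ t ∈ Finset.range n, S.lam (((t + 1 : ℕ)) : Fin k) := by
  induction n with
  | zero => rfl
  | succ n ih => rw [Finset.prod_range_succ, ← ih, recProd, mul_comm]

lemma val_one (hk2 : 2 ≤ k) : ((1 : Fin k) : ℕ) = 1 := by
  rw [Fin.val_one']
  exact Nat.mod_eq_of_lt hk2

lemma claimA (hPi : ∏ j : Fin k, S.lam j = 1) (j : Fin k) :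
    recProd S.lam ((j + 1 : Fin k) : ℕ)
      = S.lam (j + 1) * recProd S.lam ((j : Fin k) : ℕ) := by
  have hadd : ((j + 1 : Fin k) : ℕ) = ((j : ℕ) + 1) % k := by
    rw [Fin.val_add, val_one S.hk2]
  have hjlt : (j : ℕ) < k := j.isLt
  rcases lt_or_eq_of_le (Nat.succ_le_of_lt hjlt) with hlt | heq
  · rw [hadd, Nat.mod_eq_of_lt hlt]
    show S.lam (((j : ℕ) + 1 : ℕ) : Fin k) * recProd S.lam (j : ℕ) = _
    congr 2
    push_cast
    rfl
  · have hj1 : j + 1 = 0 := by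
      apply Fin.ext
      rw [hadd, show (j : ℕ) + 1 = k from heq, Nat.mod_self]
      rfl
    rw [hj1, Fin.val_zero]
    show (1 : ℝ) = S.lam 0 * recProd S.lam (j : ℕ)
    have hprod : ∏ t ∈ Finset.range k, S.lam ((t : ℕ) : Fin k) = 1 := by
      rw [← Fin.prod_univ_eq_prod_range (fun t => S.lam ((t : ℕ) : Fin k)) k]
      rw [← hPi]
      exact Finset.prod_congr rfl fun x _ => by rw [Fin.cast_val_eq_self]
    have hk1 : k - 1 + 1 = k := by omega
    have hsplit : ∏ t ∈ Finset.range (k - 1 + 1), S.lam ((t : ℕ) : Fin k)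
        = (∏ t ∈ Finset.range (k - 1), S.lam (((t + 1 : ℕ)) : Fin k))
          * S.lam ((0 : ℕ) : Fin k) :=
      Finset.prod_range_succ' _ _
    rw [hk1, hprod, ← S.recProd_eq (k - 1)] at hsplit
    have hjv : (j : ℕ) = k - 1 := by omega
    rw [hjv, mul_comm]
    rw [Nat.cast_zero] at hsplit
    exact hsplit

lemma claimA' (hPi : ∏ j : Fin k, S.lam j = 1) (j : Fin k) :
    recProd S.lam ((j : Fin k) : ℕ)
      = S.lam j * recProd S.lam ((j - 1 : Fin k) : ℕ) := by
  have := S.claimA hPi (j - 1)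
  rwa [sub_add_cancel] at this

lemma force_of_lam (hPi : ∏ j : Fin k, S.lam j = 1) :
    ∃ F : CycleLoad k, F.Valid C ∧ (∀ i, EqAt F i) ∧ F.Nonzero := by
  set cc : Fin k → ℝ := fun j => recProd S.lam (j : ℕ) with hccdef
  have hrec : ∀ j : Fin k, cc j = S.lam j * cc (j - 1) := fun j => S.claimA' hPi j
  have hccne : ∀ j : Fin k, cc j ≠ 0 := fun j => recProd_ne S.lam_ne (j : ℕ)
  refine ⟨⟨fun j => fun x y => cc j * wedgeE (C.P j) (C.P (j + 1)) x y,
      fun j => wedgeE (C.P j)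
        ((-(cc (j - 1))) • C.P (j - 1) + (-(cc j)) • C.P (j + 1))⟩,
    ⟨fun j => ?_, fun j => ?_⟩, fun j => ?_, Or.inl ⟨0, ?_⟩⟩
  · exact ⟨cc j • C.P j, C.P (j + 1),
      Submodule.smul_mem _ _ (Submodule.subset_span (Set.mem_insert _ _)),
      Submodule.subset_span (Set.mem_insert_of_mem _ rfl),
      (wedgeE_smul_left_s12 _ _ _).symm⟩
  · refine ⟨C.P j, _, C.hPL j, ?_, rfl⟩
    apply (S.hg j _).2
    rw [dot_add_smul']
    have hcj := hrec j
    rw [lam] at hcj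
    set B1 := S.g j ⬝ᵥ C.P (j + 1) with hB1
    set B2 := S.g j ⬝ᵥ C.P (j - 1) with hB2
    have hB1ne : B1 ≠ 0 := S.hB j
    have h5 : cc j * B1 = -B2 * cc (j - 1) := by
      rw [hcj]
      field_simp
    linear_combination -h5
  · show -_ + _ + _ = 0
    funext x y
    simp only [Pi.add_apply, Pi.neg_apply, Pi.zero_apply]
    rw [show (j - 1) + 1 = j from sub_add_cancel j 1]
    simp only [wedgeE, dualE_comb]
    ring
  · intro h
    have h2 := congrFun (congrFun h (C.P 0)) (S.g 0)
    simp only [Pi.zero_apply] at h2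
    rw [wedgeE_eval] at h2
    rw [show C.P 0 ⬝ᵥ S.g 0 = S.g 0 ⬝ᵥ C.P 0 from dotProduct_comm _ _,
      show C.P (0 + 1) ⬝ᵥ S.g 0 = S.g 0 ⬝ᵥ C.P (0 + 1) from dotProduct_comm _ _,
      S.hgP 0] at h2
    have hcc0 : cc 0 = 1 := rfl
    rw [hcc0, one_mul] at h2
    have hPP : C.P 0 ⬝ᵥ C.P 0 ≠ 0 := fun hz =>
      C.hP 0 (dotProduct_self_eq_zero.1 hz)
    have := mul_ne_zero hPP (S.hB 0)
    apply this
    linarith [h2]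

lemma lam_of_force
    (hF : ∃ F : CycleLoad k, F.Valid C ∧ (∀ i, EqAt F i) ∧ F.Nonzero) :
    ∏ j : Fin k, S.lam j = 1 := by
  obtain ⟨F, hval, heq, hnz⟩ := hF
  have hFe : ∀ j, ∃ c : ℝ, F.Fe j = fun x y => c * wedgeE (C.P j) (C.P (j + 1)) x y :=
    fun j => alongSub_span_pair (hval.1 j)
  choose cc hcc using hFe
  have hrec : ∀ j : Fin k,
      cc (j - 1) * (S.g j ⬝ᵥ C.P (j - 1)) + cc j * (S.g j ⬝ᵥ C.P (j + 1)) = 0 := by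
    intro j
    have hq := congrFun (congrFun (heq j) (C.P j)) (S.g j)
    simp only [Pi.add_apply, Pi.neg_apply, Pi.zero_apply] at hq
    rw [hcc (j - 1), hcc j] at hq
    simp only at hq
    rw [show (j - 1) + 1 = j from sub_add_cancel j 1] at hq
    have hff : F.Ff j (C.P j) (S.g j) = 0 :=
      alongSub_eval_normal (fun x hx => (S.hg j x).1 hx) (hval.2 j) (C.P j)
    rw [hff] at hq
    rw [wedgeE_eval, wedgeE_eval] at hq
    rw [show C.P j ⬝ᵥ S.g j = S.g j ⬝ᵥ C.P j from dotProduct_comm _ _,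
      show C.P (j - 1) ⬝ᵥ S.g j = S.g j ⬝ᵥ C.P (j - 1) from dotProduct_comm _ _,
      show C.P (j + 1) ⬝ᵥ S.g j = S.g j ⬝ᵥ C.P (j + 1) from dotProduct_comm _ _,
      S.hgP j] at hq
    have hPP : C.P j ⬝ᵥ C.P j ≠ 0 := fun hz => C.hP j (dotProduct_self_eq_zero.1 hz)
    have hq2 : (cc (j - 1) * (S.g j ⬝ᵥ C.P (j - 1))
        + cc j * (S.g j ⬝ᵥ C.P (j + 1))) * (C.P j ⬝ᵥ C.P j) = 0 := by
      linear_combination hq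
    exact (mul_eq_zero.1 hq2).resolve_right hPP
  -- some coefficient is nonzero
  have hex : ∃ j, cc j ≠ 0 := by
    by_contra hall
    push_neg at hall
    have hFe0 : ∀ j, F.Fe j = 0 := by
      intro j
      rw [hcc j, hall j]
      funext x y
      simp
    rcases hnz with ⟨j0, hj0⟩ | ⟨j0, hj0⟩
    · exact hj0 (hFe0 j0)
    · apply hj0
      have hq := heq j0
      rw [EqAt, hFe0 j0, hFe0 (j0 - 1)] at hq
      simpa using hq
  obtain ⟨j0, hj0⟩ := hex
  have hstep : ∀ m : Fin k, cc m ≠ 0 → cc (m + 1) ≠ 0 := by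
    intro m hm hz
    have h := hrec (m + 1)
    rw [add_sub_cancel_right, hz, zero_mul, add_zero, mul_eq_zero] at h
    rcases h with h | h
    · exact hm h
    · exact S.hB'' m h
  have hccne : ∀ j : Fin k, cc j ≠ 0 := by
    have hn : ∀ n : ℕ, cc (j0 + (n : Fin k)) ≠ 0 := by
      intro n
      induction n with
      | zero => simpa using hj0
      | succ n ih =>
          have h2 := hstep _ ih
          rw [Nat.cast_add, Nat.cast_one, ← add_assoc]
          exact h2
    intro j
    have hj : j0 + ((((j - j0 : Fin k) : ℕ) : Fin k)) = j := by
      rw [Fin.cast_val_eq_self, add_comm]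
      exact sub_add_cancel j j0
    have h4 := hn (((j - j0 : Fin k) : ℕ))
    rw [hj] at h4
    exact h4
  have hlam : ∀ j : Fin k, S.lam j = cc j / cc (j - 1) := by
    intro j
    rw [lam, div_eq_div_iff (S.hB j) (hccne (j - 1))]
    linear_combination -hrec j
  rw [Finset.prod_congr rfl fun j _ => hlam j, Finset.prod_div_distrib]
  rw [show (∏ j : Fin k, cc (j - 1)) = ∏ j : Fin k, cc j from
    Equiv.prod_comp (Equiv.subRight (1 : Fin k)) cc]
  exact div_self (Finset.prod_ne_zero_iff.2 fun j _ => hccne j)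

lemma main_iff (T : Setup k C ℓ) (i : Fin k) :
    MonoTrivial C ℓ i ↔
      ∃ F : CycleLoad k, F.Valid C ∧ (∀ i, EqAt F i) ∧ F.Nonzero := by
  rw [T.mono_iff_lam i]
  exact ⟨T.force_of_lam, T.lam_of_force⟩

end Setup

/-! ### Building the setup from the hypotheses -/

def dotL (g : V3) : V3 →ₗ[ℝ] ℝ where
  toFun x := g ⬝ᵥ x
  map_add' x y := dotProduct_add g x y
  map_smul' c x := by simp [dotProduct_smul]

lemma buildSetup {k : ℕ} [NeZero k] {C : FramedCycle k} {ℓ : Submodule ℝ V3}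
    (hGP : GenPos C) (hℓ : Module.finrank ℝ ℓ = 2)
    (hℓint : ∀ i j : Fin k, i ≠ j → ¬(edgeLn C i ⊓ edgeLn C j ≤ ℓ)) :
    Nonempty (Setup k C ℓ) := by
  have hk2 : 2 ≤ k := by
    by_contra hlt
    have hk1 : k = 1 := by have := NeZero.ne k; omega
    subst hk1
    have h1 := hGP.1 0
    have h2 : edgeLn C 0 = Submodule.span ℝ ({C.P 0} : Set V3) := by
      rw [edgeLn, projLine, show (0 + 1 : Fin 1) = 0 from Subsingleton.elim _ _,
        Set.pair_eq_singleton]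
    rw [h2, finrank_span_singleton (C.hP 0)] at h1
    norm_num at h1
  have hgex := fun j => exists_normal (C.hL j)
  choose g hg using hgex
  obtain ⟨φ, hφ⟩ := exists_normal hℓ
  have hgP : ∀ j, g j ⬝ᵥ C.P j = 0 := fun j => (hg j _).1 (C.hPL j)
  have hB : ∀ j, g j ⬝ᵥ C.P (j + 1) ≠ 0 :=
    fun j hz => (hGP.2.2.2 j).2 ((hg j _).2 hz)
  have hB' : ∀ j, g j ⬝ᵥ C.P (j - 1) ≠ 0 :=
    fun j hz => (hGP.2.2.2 j).1 ((hg j _).2 hz)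
  have hB'' : ∀ j, g (j + 1) ⬝ᵥ C.P j ≠ 0 := by
    intro j
    have := hB' (j + 1)
    rwa [add_sub_cancel_right] at this
  -- the vertices are not on the auxiliary line
  have hA : ∀ j, φ ⬝ᵥ C.P j ≠ 0 := by
    intro j hz
    have hPl : C.P j ∈ ℓ := (hφ _).2 hz
    have hne : j - 1 ≠ j := by
      intro h
      have h' := congrArg (· + 1) h
      simp only [sub_add_cancel] at h'
      have h2 : (1 : Fin k) = 0 := left_eq_add.1 h'
      have h3 : ((1 : Fin k) : ℕ) = 1 := by
        rw [Fin.val_one']; exact Nat.mod_eq_of_lt hk2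
      rw [h2] at h3
      simp at h3
    have hneq := hGP.2.1 _ _ hne
    have hmem1 : C.P j ∈ edgeLn C (j - 1) := by
      apply Submodule.subset_span
      rw [show C.P j = C.P ((j - 1) + 1) by rw [sub_add_cancel]]
      exact Set.mem_insert_of_mem _ rfl
    have hmem2 : C.P j ∈ edgeLn C j := Submodule.subset_span (Set.mem_insert _ _)
    have hfr : Module.finrank ℝ ((edgeLn C (j - 1) ⊓ edgeLn C j : Submodule ℝ V3)) ≤ 1 := by
      by_contra h2
      push_neg at h2
      have e1 : edgeLn C (j - 1) ⊓ edgeLn C j = edgeLn C (j - 1) :=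
        Submodule.eq_of_le_of_finrank_le inf_le_left (by rw [hGP.1 (j - 1)]; omega)
      have e2 : edgeLn C (j - 1) ⊓ edgeLn C j = edgeLn C j :=
        Submodule.eq_of_le_of_finrank_le inf_le_right (by rw [hGP.1 j]; omega)
      exact hneq (e1.symm.trans e2)
    have hsp : Submodule.span ℝ ({C.P j} : Set V3) = edgeLn C (j - 1) ⊓ edgeLn C j := by
      apply Submodule.eq_of_le_of_finrank_le
      · rw [Submodule.span_le, Set.singleton_subset_iff]
        exact ⟨hmem1, hmem2⟩
      · rw [finrank_span_singleton (C.hP j)]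
        exact hfr
    apply hℓint (j - 1) j hne
    rw [← hsp, Submodule.span_le, Set.singleton_subset_iff]
    exact hPl
  -- the edge lines are kernels of their normal covectors
  have hEk : ∀ j (x : V3), x ∈ edgeLn C j ↔ eE C j ⬝ᵥ x = 0 := by
    intro j
    have hwit : eE C j ⬝ᵥ (g (j + 1) ⨯₃ φ) ≠ 0 := by
      rw [eE, cross_dot_cross,
        dotProduct_comm (C.P j) (g (j + 1)), dotProduct_comm (C.P (j + 1)) φ,
        dotProduct_comm (C.P j) φ, dotProduct_comm (C.P (j + 1)) (g (j + 1)),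
        hgP (j + 1)]
      have := mul_ne_zero (hB'' j) (hA (j + 1))
      intro h2
      apply this
      linarith [h2]
    have hle : edgeLn C j ≤ LinearMap.ker (dotL (eE C j)) := by
      rw [edgeLn, projLine, Submodule.span_le]
      rintro x (rfl | rfl)
      · exact Setup.dot_e_P (C := C) j
      · exact Setup.dot_e_P' (C := C) j
    have hKne : LinearMap.ker (dotL (eE C j)) ≠ ⊤ := by
      intro h
      exact hwit (by
        have : (g (j + 1) ⨯₃ φ) ∈ LinearMap.ker (dotL (eE C j)) := by rw [h]; trivial
        exact this)
    have hKfr : Module.finrank ℝ (LinearMap.ker (dotL (eE C j))) < 3 := by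
      have h3 : Module.finrank ℝ V3 = 3 := by simp
      have := Submodule.finrank_lt (K := ℝ) (V := V3) hKne
      omega
    have heq : edgeLn C j = LinearMap.ker (dotL (eE C j)) :=
      Submodule.eq_of_le_of_finrank_le hle (by rw [hGP.1 j]; omega)
    intro x
    rw [heq]
    exact LinearMap.mem_ker
  exact ⟨⟨hk2, g, φ, hg, hφ, hA, hB, hB', hEk⟩⟩

/-- For a framed cycle in general position and an auxiliary line `ℓ` containing no
intersection point of any pair of edge lines, the monodromy operator at `ℓᵢ` is trivial if and
only if the framed cycle admits a nonzero equilibrium force-load. -/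
theorem stmt12 (k : ℕ) [NeZero k] (C : FramedCycle k) (hGP : GenPos C)
    (ℓ : Submodule ℝ V3) (hℓ : Module.finrank ℝ ℓ = 2)
    (hℓint : ∀ i j : Fin k, i ≠ j → ¬(edgeLn C i ⊓ edgeLn C j ≤ ℓ)) (i : Fin k) :
    MonoTrivial C ℓ i ↔
      ∃ F : CycleLoad k, F.Valid C ∧ (∀ i, EqAt F i) ∧ F.Nonzero := by
  obtain ⟨S⟩ := buildSetup hGP hℓ hℓint
  exact Setup.main_iff S i
end
end

section
/- A nonzero equilibrium force-load on the leaves together with the combinatorial type of the tree uniquely determines a weakly generic resolution scheme: if (T, L)_p and (T, L')_p are weakly generic resolution schemes on the same tree T admitting nonzero equilibrium force-loads F and F' that agree on all leaves of T, then L = L' and F = F' on every edge of T. -/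
open scoped Classical

noncomputable section

/-- The assignment of lines to the edges of the tree is weakly generic: adjacent edges are
assigned distinct lines. -/
def WeaklyGeneric {V : Type} (G : SimpleGraph V) (L : Sym2 V → Submodule ℝ V3) : Prop :=
  ∀ u v w : V, G.Adj u v → G.Adj v w → u ≠ w → L s(u, v) ≠ L s(v, w)

/-- `F` is an equilibrium force-load on the resolution scheme `(T, L)`:
opposite forces along each edge with line of force `L(e)`, vanishing off edges,
summing to zero at every degree-3 vertex. -/
def IsEqTreeLoad {V : Type} [Fintype V] (G : SimpleGraph V) [DecidableRel G.Adj]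
    (L : Sym2 V → Submodule ℝ V3) (F : V → V → Form) : Prop :=
  (∀ u v, F u v = -F v u) ∧
  (∀ u v, ¬G.Adj u v → F u v = 0) ∧
  (∀ u v, G.Adj u v → AlongSub (F u v) (L s(u, v))) ∧
  (∀ v, G.degree v = 3 → ∑ u, F v u = 0)

namespace Stmt16Aux

lemma dualE_single (a : V3) (i : Fin 3) : dualE a (Pi.single i 1) = a i := by
  simp [dualE, Pi.single_apply]

lemma dualE_inj {a b : V3} (h : dualE a = dualE b) : a = b := by
  funext i
  have := congrFun h (Pi.single i 1)
  rwa [dualE_single, dualE_single] at this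

lemma dualE_smul (c : ℝ) (a : V3) : dualE (c • a) = fun y => c * dualE a y := by
  funext y
  simp [dualE, Finset.mul_sum, mul_assoc]

lemma wedge_neg (a b : V3) : -wedgeE a b = wedgeE b a := by
  funext x y
  simp [wedgeE]
  ring

lemma wedge_smul (a : V3) (c : ℝ) : wedgeE a (c • a) = 0 := by
  funext x y
  simp [wedgeE, dualE_smul]
  ring

lemma wedge_smul' (a : V3) (c : ℝ) : wedgeE (c • a) a = 0 := by
  rw [← wedge_neg, wedge_smul, neg_zero]

lemma range_pair (a b : V3) : Set.range ![a, b] = {a, b} := by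
  simp [Matrix.range_cons, Matrix.range_empty, Set.pair_comm]

lemma indep_of_wedge_ne {a b : V3} (h : wedgeE a b ≠ 0) : LinearIndependent ℝ ![a, b] := by
  rw [linearIndependent_fin2]
  constructor
  · rintro rfl
    apply h
    funext x y
    simp [wedgeE, dualE]
  · intro c hc
    simp only [Matrix.cons_val_one, Matrix.head_cons, Matrix.cons_val_zero] at hc
    exact h (by rw [← hc, wedge_smul'])

lemma exists_dual {a b c : V3} (h : LinearIndependent ℝ ![a, b, c]) :
    ∃ x : V3, dualE a x = 1 ∧ dualE b x = 0 ∧ dualE c x = 0 := by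
  have hcard : Fintype.card (Fin 3) = Module.finrank ℝ V3 := by
    simp [Module.finrank_fintype_fun_eq_card]
  let B := basisOfLinearIndependentOfCardEqFinrank h hcard
  have hB : ⇑B = ![a, b, c] := coe_basisOfLinearIndependentOfCardEqFinrank h hcard
  let f : V3 →ₗ[ℝ] ℝ := B.coord 0
  have key : ∀ w : V3, (∑ i, w i * f (Pi.single i 1)) = f w := by
    intro w
    have hw : (∑ i, w i • (Pi.single i (1:ℝ) : V3)) = w := by
      funext j
      simp [Pi.single_apply]
    calc ∑ i, w i * f (Pi.single i 1) = ∑ i, f (w i • (Pi.single i (1:ℝ) : V3)) := by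
          simp [map_smul]
      _ = f (∑ i, w i • (Pi.single i (1:ℝ) : V3)) := (map_sum f _ _).symm
      _ = f w := by rw [hw]
  have ha : a = B 0 := by rw [hB]; simp
  have hb : b = B 1 := by rw [hB]; simp
  have hc : c = B 2 := by rw [hB]; simp
  refine ⟨fun i => f (Pi.single i 1), ?_, ?_, ?_⟩
  · show (∑ i, a i * f (Pi.single i 1)) = 1
    rw [key, ha]
    simp [f, Module.Basis.coord_apply]
  · show (∑ i, b i * f (Pi.single i 1)) = 0
    rw [key, hb]
    simp [f, Module.Basis.coord_apply]
  · show (∑ i, c i * f (Pi.single i 1)) = 0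
    rw [key, hc]
    simp [f, Module.Basis.coord_apply]

lemma mem_span_of_wedge_eq {a b a' b' : V3} (h : wedgeE a b = wedgeE a' b')
    (h0 : wedgeE a b ≠ 0) :
    a' ∈ Submodule.span ℝ ({a, b} : Set V3) ∧ b' ∈ Submodule.span ℝ ({a, b} : Set V3) := by
  have hab := indep_of_wedge_ne h0
  have h0' : wedgeE a' b' ≠ 0 := h ▸ h0
  constructor
  · by_contra hm
    have hind : LinearIndependent ℝ ![a', a, b] := by
      rw [show ![a', a, b] = Fin.cons a' ![a, b] from rfl, linearIndependent_fin_cons]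
      exact ⟨hab, by rwa [range_pair]⟩
    obtain ⟨x, hx1, hx2, hx3⟩ := exists_dual hind
    have hz : ∀ y, wedgeE a' b' x y = 0 := by
      intro y
      rw [← h]
      simp [wedgeE, hx2, hx3]
    have hb' : b' = (dualE b' x) • a' := by
      apply dualE_inj
      rw [dualE_smul]
      funext y
      have h5 := hz y
      simp only [wedgeE, hx1, one_mul] at h5
      linear_combination h5
    exact h0' (by rw [hb', wedge_smul])
  · by_contra hm
    have hind : LinearIndependent ℝ ![b', a, b] := by
      rw [show ![b', a, b] = Fin.cons b' ![a, b] from rfl, linearIndependent_fin_cons]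
      exact ⟨hab, by rwa [range_pair]⟩
    obtain ⟨x, hx1, hx2, hx3⟩ := exists_dual hind
    have hz : ∀ y, wedgeE a' b' x y = 0 := by
      intro y
      rw [← h]
      simp [wedgeE, hx2, hx3]
    have ha' : a' = (dualE a' x) • b' := by
      apply dualE_inj
      rw [dualE_smul]
      funext y
      have h5 := hz y
      simp only [wedgeE, hx1, mul_one] at h5
      linear_combination -h5
    exact h0' (by rw [ha', wedge_smul'])

lemma span_pair_eq_of_wedge_eq {a b a' b' : V3} (h : wedgeE a b = wedgeE a' b')
    (h0 : wedgeE a b ≠ 0) :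
    Submodule.span ℝ ({a, b} : Set V3) = Submodule.span ℝ ({a', b'} : Set V3) := by
  have h1 := mem_span_of_wedge_eq h h0
  have h2 := mem_span_of_wedge_eq h.symm (h ▸ h0)
  refine le_antisymm ?_ ?_ <;>
    [exact Submodule.span_le.2 (Set.insert_subset_iff.2 ⟨h2.1, Set.singleton_subset_iff.2 h2.2⟩);
     exact Submodule.span_le.2 (Set.insert_subset_iff.2 ⟨h1.1, Set.singleton_subset_iff.2 h1.2⟩)]

lemma line_eq_span {a b : V3} {W : Submodule ℝ V3} (ha : a ∈ W) (hb : b ∈ W)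
    (h0 : wedgeE a b ≠ 0) (h2 : Module.finrank ℝ W = 2) :
    W = Submodule.span ℝ ({a, b} : Set V3) := by
  have hle : Submodule.span ℝ ({a, b} : Set V3) ≤ W :=
    Submodule.span_le.2 (Set.insert_subset_iff.2 ⟨ha, Set.singleton_subset_iff.2 hb⟩)
  have hfr : Module.finrank ℝ (Submodule.span ℝ ({a, b} : Set V3)) = 2 := by
    rw [← range_pair a b]
    have := finrank_span_eq_card (indep_of_wedge_ne h0)
    simpa using this
  exact (Submodule.eq_of_le_of_finrank_eq hle (by rw [hfr, h2])).symm

lemma line_unique {Fm : Form} {W W' : Submodule ℝ V3} (h0 : Fm ≠ 0)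
    (h : AlongSub Fm W) (h' : AlongSub Fm W')
    (h2 : Module.finrank ℝ W = 2) (h2' : Module.finrank ℝ W' = 2) : W = W' := by
  obtain ⟨a, b, ha, hb, hw⟩ := h
  obtain ⟨a', b', ha', hb', hw'⟩ := h'
  have hne : wedgeE a b ≠ 0 := hw ▸ h0
  have heq : wedgeE a b = wedgeE a' b' := hw.symm.trans hw'
  rw [line_eq_span ha hb hne h2, line_eq_span ha' hb' (heq ▸ hne) h2',
    span_pair_eq_of_wedge_eq heq hne]

lemma concat_isPath {V : Type} {G : SimpleGraph V} {x u v : V} {p : G.Walk x u}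
    (hp : p.IsPath) (h : G.Adj u v) (hv : v ∉ p.support) : (p.concat h).IsPath := by
  rw [SimpleGraph.Walk.isPath_def, SimpleGraph.Walk.support_concat,
    List.nodup_append]
  exact ⟨hp.support_nodup, List.nodup_singleton v, by simp only [List.mem_singleton]; rintro a ha b rfl rfl; exact hv ha⟩

lemma tree_dist_key {V : Type} {G : SimpleGraph V} (htree : G.IsTree)
    {u v w x : V} (huv : G.Adj u v) (hvw : G.Adj v w) (huw : u ≠ w)
    (h1 : G.dist x w < G.dist x v) : G.dist x v < G.dist x u := by
  have hconn := htree.isConnected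
  obtain ⟨pw, hpwp, hpwl⟩ := hconn.exists_path_of_dist x w
  have hdle : G.dist x v ≤ G.dist x w + 1 := by
    have h2 := SimpleGraph.dist_le (pw.concat hvw.symm)
    rwa [SimpleGraph.Walk.length_concat, hpwl] at h2
  by_contra hcon
  push_neg at hcon
  obtain ⟨pu, hpup, hpul⟩ := hconn.exists_path_of_dist x u
  have hvnot : v ∉ pu.support := by
    intro hmem
    have h2 : G.dist x v ≤ (pu.takeUntil v hmem).length := SimpleGraph.dist_le _
    have h3 := SimpleGraph.Walk.length_takeUntil_le pu hmem
    have h5 := congrArg SimpleGraph.Walk.length (pu.take_spec hmem)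
    rw [SimpleGraph.Walk.length_append] at h5
    have h6 : (pu.dropUntil v hmem).length = 0 := by omega
    exact huv.ne' (SimpleGraph.Walk.eq_of_length_eq_zero h6)
  have hvnotw : v ∉ pw.support := by
    intro hmem
    have h2 : G.dist x v ≤ (pw.takeUntil v hmem).length := SimpleGraph.dist_le _
    have h3 := SimpleGraph.Walk.length_takeUntil_le pw hmem
    omega
  have hP1 : (pw.concat hvw.symm).IsPath := concat_isPath hpwp hvw.symm hvnotw
  have hP2 : (pu.concat huv).IsPath := concat_isPath hpup huv hvnot
  obtain ⟨q, -, hq⟩ := htree.existsUnique_path x v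
  have hP12 : pw.concat hvw.symm = pu.concat huv := (hq _ hP1).trans (hq _ hP2).symm
  have e1 : (pw.concat hvw.symm).reverse.getVert 1 = w := by
    rw [SimpleGraph.Walk.reverse_concat, SimpleGraph.Walk.getVert_cons_succ,
      SimpleGraph.Walk.getVert_zero]
  have e2 : (pu.concat huv).reverse.getVert 1 = u := by
    rw [SimpleGraph.Walk.reverse_concat, SimpleGraph.Walk.getVert_cons_succ,
      SimpleGraph.Walk.getVert_zero]
  exact huw (by rw [← e2, ← hP12, e1])

lemma three_nbrs {V : Type} [Fintype V] [DecidableEq V] {G : SimpleGraph V} [DecidableRel G.Adj]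
    {v a : V} (ha : G.Adj v a) (h3 : G.degree v = 3) :
    ∃ w1 w2, G.Adj v w1 ∧ G.Adj v w2 ∧ w1 ≠ w2 ∧ a ≠ w1 ∧ a ≠ w2 ∧
      G.neighborFinset v = {a, w1, w2} := by
  have hmem : a ∈ G.neighborFinset v := by rwa [SimpleGraph.mem_neighborFinset]
  have hcard : ((G.neighborFinset v).erase a).card = 2 := by
    rw [Finset.card_erase_of_mem hmem, SimpleGraph.card_neighborFinset_eq_degree, h3]
  obtain ⟨w1, w2, h12, heq⟩ := Finset.card_eq_two.1 hcard
  have hw1 : w1 ∈ (G.neighborFinset v).erase a := by rw [heq]; simp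
  have hw2 : w2 ∈ (G.neighborFinset v).erase a := by rw [heq]; simp
  rw [Finset.mem_erase, SimpleGraph.mem_neighborFinset] at hw1 hw2
  refine ⟨w1, w2, hw1.2, hw2.2, h12, (Ne.symm hw1.1), (Ne.symm hw2.1), ?_⟩
  rw [← Finset.insert_erase hmem, heq]

lemma sum_three {V : Type} [Fintype V] [DecidableEq V] {G : SimpleGraph V} [DecidableRel G.Adj]
    {v a w1 w2 : V} (hnb : G.neighborFinset v = {a, w1, w2})
    (haw1 : a ≠ w1) (haw2 : a ≠ w2) (h12 : w1 ≠ w2)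
    (H : V → V → Form) (hz : ∀ x, ¬G.Adj v x → H v x = 0) (hs : ∑ u, H v u = 0) :
    H v a + (H v w1 + H v w2) = 0 := by
  have h1 : ∑ u ∈ G.neighborFinset v, H v u = ∑ u, H v u :=
    Finset.sum_subset (Finset.subset_univ _)
      (fun x _ hx => hz x (fun hadj => hx (by rwa [SimpleGraph.mem_neighborFinset])))
  rw [hnb, Finset.sum_insert (by simp [haw1, haw2]), Finset.sum_insert (by simp [h12]),
    Finset.sum_singleton, hs] at h1
  exact h1

end Stmt16Aux


/-- A nonzero equilibrium force-load on the leaves, together with the combinatorial type of the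
tree, uniquely determines a weakly generic resolution scheme: if two weakly generic resolution
schemes on the same tree admit nonzero equilibrium force-loads agreeing on all leaf edges, then
the line assignments agree on every edge and the force-loads agree everywhere. -/
theorem stmt16 {V : Type} [Fintype V] [DecidableEq V] [Nonempty V]
    (G : SimpleGraph V) [DecidableRel G.Adj] (p : V3) (hp : p ≠ 0)
    (L L' : Sym2 V → Submodule ℝ V3)
    (htree : G.IsTree) (hdeg : ∀ v, G.degree v = 1 ∨ G.degree v = 3)
    (hL2 : ∀ u v, G.Adj u v → Module.finrank ℝ (L s(u, v)) = 2)
    (hLp : ∀ u v, G.Adj u v → p ∈ L s(u, v))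
    (hL2' : ∀ u v, G.Adj u v → Module.finrank ℝ (L' s(u, v)) = 2)
    (hLp' : ∀ u v, G.Adj u v → p ∈ L' s(u, v))
    (hWG : WeaklyGeneric G L) (hWG' : WeaklyGeneric G L')
    (F F' : V → V → Form)
    (hF : IsEqTreeLoad G L F) (hF' : IsEqTreeLoad G L' F')
    (hF0 : F ≠ 0) (hF'0 : F' ≠ 0)
    (hleaf : ∀ u v, G.Adj u v → G.degree v = 1 → F u v = F' u v) :
    (∀ u v, G.Adj u v → L s(u, v) = L' s(u, v)) ∧ F = F' := by
  obtain ⟨hFsym, hFz, hFal, hFeq⟩ := hF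
  obtain ⟨hFsym', hFz', hFal', hFeq'⟩ := hF'
  set S : V → V → Finset V := fun u v => Finset.univ.filter (fun x => G.dist x v < G.dist x u)
    with hS
  have hmemS : ∀ u v, G.Adj u v → v ∈ S u v := by
    intro u v huv
    simp only [hS, Finset.mem_filter, Finset.mem_univ, true_and, SimpleGraph.dist_self]
    exact htree.isConnected.pos_dist_of_ne huv.ne'
  have hcardS : ∀ u v w, G.Adj u v → G.Adj v w → u ≠ w → (S v w).card < (S u v).card := by
    intro u v w huv hvw huw
    apply Finset.card_lt_card
    rw [Finset.ssubset_def]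
    constructor
    · intro x hx
      simp only [hS, Finset.mem_filter, Finset.mem_univ, true_and] at hx ⊢
      exact Stmt16Aux.tree_dist_key htree huv hvw huw hx
    · intro hsub
      have hvv := hsub (hmemS u v huv)
      simp only [hS, Finset.mem_filter, Finset.mem_univ, true_and,
        SimpleGraph.dist_self] at hvv
      omega
  have spread : ∀ v a, G.Adj v a → F v a = 0 → ∀ y, G.Adj v y → F v y = 0 := by
    intro v a hva h0 y hvy
    rcases hdeg v with h1 | h3
    · have hm1 : y ∈ G.neighborFinset v := by rwa [SimpleGraph.mem_neighborFinset]
      have hm2 : a ∈ G.neighborFinset v := by rwa [SimpleGraph.mem_neighborFinset]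
      have hya : y = a := by
        refine Finset.card_le_one.1 (le_of_eq ?_) y hm1 a hm2
        rw [SimpleGraph.card_neighborFinset_eq_degree, h1]
      rwa [hya]
    · obtain ⟨w1, w2, hw1, hw2, h12, haw1, haw2, hnb⟩ := Stmt16Aux.three_nbrs hva h3
      have hsum := Stmt16Aux.sum_three hnb haw1 haw2 h12 F (fun x hx => hFz v x hx) (hFeq v h3)
      rw [h0, zero_add] at hsum
      have hz1 : F v w1 = 0 := by
        by_contra hne
        have heqn : F v w1 = -(F v w2) := by
          rw [eq_neg_iff_add_eq_zero]
          exact hsum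
        obtain ⟨a1, b1, ha1, hb1, hwed1⟩ := hFal v w1 hw1
        obtain ⟨a2, b2, ha2, hb2, hwed2⟩ := hFal v w2 hw2
        have hal2 : AlongSub (F v w1) (L s(v, w2)) := by
          refine ⟨b2, a2, hb2, ha2, ?_⟩
          rw [heqn, hwed2, Stmt16Aux.wedge_neg]
        have hLL := Stmt16Aux.line_unique hne ⟨a1, b1, ha1, hb1, hwed1⟩ hal2
          (hL2 v w1 hw1) (hL2 v w2 hw2)
        have hne12 := hWG w1 v w2 hw1.symm hw2 h12
        rw [show s(w1, v) = s(v, w1) from Sym2.eq_swap] at hne12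
        exact hne12 hLL
      have hz2 : F v w2 = 0 := by
        rw [hz1, zero_add] at hsum
        exact hsum
      have hy : y ∈ ({a, w1, w2} : Finset V) := by
        rw [← hnb, SimpleGraph.mem_neighborFinset]
        exact hvy
      simp only [Finset.mem_insert, Finset.mem_singleton] at hy
      rcases hy with rfl | rfl | rfl
      · exact h0
      · exact hz1
      · exact hz2
  have hFne : ∀ u v, G.Adj u v → F u v ≠ 0 := by
    intro u v huv h0
    apply hF0
    have hQv : ∀ y, G.Adj v y → F v y = 0 := by
      apply spread v u huv.symm
      rw [hFsym v u, h0, neg_zero]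
    have hall : ∀ x z (w : G.Walk x z), (∀ y, G.Adj z y → F z y = 0) →
        ∀ y, G.Adj x y → F x y = 0 := by
      intro x z w
      induction w with
      | nil => exact fun hQ => hQ
      | cons h p ih =>
        intro hQ
        apply spread _ _ h
        rw [hFsym, ih hQ _ h.symm, neg_zero]
    funext x y
    show F x y = 0
    by_cases hxy : G.Adj x y
    · obtain ⟨wxv⟩ := htree.isConnected.preconnected x v
      exact hall x v wxv hQv y hxy
    · exact hFz x y hxy
  have key : ∀ n u v, G.Adj u v → (S u v).card ≤ n → F u v = F' u v := by
    intro n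
    induction n with
    | zero =>
      intro u v huv hle
      have hpos := Finset.card_pos.2 ⟨v, hmemS u v huv⟩
      omega
    | succ n ih =>
      intro u v huv hle
      rcases hdeg v with h1 | h3
      · exact hleaf u v huv h1
      · obtain ⟨w1, w2, hw1, hw2, h12, haw1, haw2, hnb⟩ := Stmt16Aux.three_nbrs huv.symm h3
        have hs := Stmt16Aux.sum_three hnb haw1 haw2 h12 F (fun x hx => hFz v x hx) (hFeq v h3)
        have hs' := Stmt16Aux.sum_three hnb haw1 haw2 h12 F' (fun x hx => hFz' v x hx)
          (hFeq' v h3)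
        have i1 : F v w1 = F' v w1 :=
          ih v w1 hw1 (Nat.lt_succ_iff.1 (lt_of_lt_of_le (hcardS u v w1 huv hw1 haw1) hle))
        have i2 : F v w2 = F' v w2 :=
          ih v w2 hw2 (Nat.lt_succ_iff.1 (lt_of_lt_of_le (hcardS u v w2 huv hw2 haw2) hle))
        have e : F u v = F v w1 + F v w2 := by
          rw [hFsym u v, eq_neg_of_add_eq_zero_left hs, neg_neg]
        have e' : F' u v = F' v w1 + F' v w2 := by
          rw [hFsym' u v, eq_neg_of_add_eq_zero_left hs', neg_neg]
        rw [e, e', i1, i2]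
  have hFF' : F = F' := by
    funext u v
    by_cases huv : G.Adj u v
    · exact key (S u v).card u v huv le_rfl
    · rw [hFz u v huv, hFz' u v huv]
  refine ⟨?_, hFF'⟩
  intro u v huv
  have hne := hFne u v huv
  have h' : AlongSub (F u v) (L' s(u, v)) := by
    rw [hFF']
    exact hFal' u v huv
  exact Stmt16Aux.line_unique hne (hFal u v huv) h' (hL2 u v huv) (hL2' u v huv)
end
end
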